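/- arXiv:0711.4100 — 6 statements merged into one kernel-verified Lean document; each statement's English description precedes it below -/
import Mathlib

section
/- For an integer n ≥ 2, the two-dimensional Lebesgue measure of C_n is zero if and only if n ∈ {2, 3, 4, 6, 8, 12, 24}. -/
/-! Sending a unit `u` of `ZMod n` to `(val u, val u⁻¹)` identifies `(ZMod n)ˣ` with `G_n`,
so `G_n` is the graph of inversion on the units. The convex hull of a planar set is Lebesgue-null
iff the set lies on a line. If every unit is its own inverse, `G_n` lies on the diagonal;
otherwise the points `(1, 1)`, `(a, b)` and `(b, a)` with `a ≠ b` span the plane. Finally,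
`u ^ 2 = 1` for every unit of `ZMod n` exactly when `n ∣ 24`. -/

open Filter MeasureTheory

noncomputable section

/-- The set `G_n = {(a,b) : 1 ≤ a,b ≤ n-1, ab ≡ 1 (mod n)}` as a set of points in `ℝ²`. -/
def modPoints (n : ℕ) : Set (ℝ × ℝ) :=
  {p | ∃ a b : ℤ, 1 ≤ a ∧ a ≤ (n : ℤ) - 1 ∧ 1 ≤ b ∧ b ≤ (n : ℤ) - 1 ∧
    (n : ℤ) ∣ a * b - 1 ∧ p = ((a : ℝ), (b : ℝ))}

/-- The convex closure `C_n` of `G_n`. -/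
def modHull (n : ℕ) : Set (ℝ × ℝ) := convexHull ℝ (modPoints n)

/-- The set of vertices (extreme points) of `C_n`. -/
def modVertices (n : ℕ) : Set (ℝ × ℝ) := Set.extremePoints ℝ (modHull n)

section ConvexHull

variable {E : Type*} [NormedAddCommGroup E] [NormedSpace ℝ E] [MeasurableSpace E] [BorelSpace E]
  [FiniteDimensional ℝ E] (μ : Measure E) [μ.IsAddHaarMeasure]

theorem addHaar_convexHull_eq_zero_iff (s : Set E) :
    μ (convexHull ℝ s) = 0 ↔ affineSpan ℝ s ≠ ⊤ := by
  refine ⟨fun h0 htop ↦ ?_, fun hs ↦ ?_⟩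
  · have hint := interior_convexHull_nonempty_iff_affineSpan_eq_top.2 htop
    exact (μ.measure_pos_of_nonempty_interior hint).ne' h0
  · exact measure_mono_null (convexHull_subset_affineSpan s) (Measure.addHaar_affineSubspace μ _ hs)

end ConvexHull

theorem affineSpan_eq_top_of_linearIndependent_vsub {k V P : Type*} [DivisionRing k]
    [AddCommGroup V] [Module k V] [AddTorsor V P] {s : Set P} {p q r : P}
    (hp : p ∈ s) (hq : q ∈ s) (hr : r ∈ s) (hli : LinearIndependent k ![q -ᵥ p, r -ᵥ p])
    (hV : Module.finrank k V = 2) : affineSpan k s = ⊤ := by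
  rw [AffineSubspace.affineSpan_eq_top_iff_vectorSpan_eq_top_of_nonempty k V P ⟨p, hp⟩,
    eq_top_iff, ← hli.span_eq_top_of_card_eq_finrank (by simp [hV]), Submodule.span_le,
    Set.range_subset_iff]
  intro i
  fin_cases i
  exacts [vsub_mem_vectorSpan k hq hp, vsub_mem_vectorSpan k hr hp]

theorem linearIndependent_pair_swap {K : Type*} [Field K] {v : K × K} (hv : v.1 ^ 2 ≠ v.2 ^ 2) :
    LinearIndependent K ![v, v.swap] := by
  rw [LinearIndependent.pair_iff]
  intro s t hst
  obtain ⟨h1, h2⟩ := Prod.ext_iff.1 hst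
  simp only [Prod.fst_add, Prod.smul_fst, smul_eq_mul, Prod.fst_swap, Prod.fst_zero, Prod.snd_add,
    Prod.smul_snd, Prod.snd_swap, Prod.snd_zero] at h1 h2
  have hv' : v.1 ^ 2 - v.2 ^ 2 ≠ 0 := sub_ne_zero.2 hv
  constructor
  · refine (mul_eq_zero.1 ?_).resolve_right hv'
    linear_combination v.1 * h1 - v.2 * h2
  · refine (mul_eq_zero.1 ?_).resolve_right hv'
    linear_combination v.1 * h2 - v.2 * h1

namespace ZMod

lemma units_pow_eq_one_of_dvd {m n k : ℕ} [NeZero n] (hmn : m ∣ n) (H : ∀ u : (ZMod n)ˣ, u ^ k = 1)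
    (v : (ZMod m)ˣ) : v ^ k = 1 := by
  obtain ⟨u, rfl⟩ := unitsMap_surjective hmn v
  rw [← map_pow, H u, map_one]

theorem forall_units_sq_eq_one_iff_dvd_24 {n : ℕ} [NeZero n] :
    (∀ u : (ZMod n)ˣ, u ^ 2 = 1) ↔ n ∣ 24 := by
  refine ⟨fun H ↦ ?_, fun h ↦ units_pow_eq_one_of_dvd h (by decide)⟩
  -- If `5 ∤ n`, then `5` is a unit and `5 ^ 2 = 1` says `n ∣ 24`;
  -- if `5 ∣ n`, then `2 ^ 2 ≠ 1` in `ZMod 5`.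
  by_cases h5 : 5 ∣ n
  · exact absurd (units_pow_eq_one_of_dvd h5 H) (by decide)
  · have hcop : Nat.Coprime 5 n := (Nat.Prime.coprime_iff_not_dvd (by norm_num)).2 h5
    have h25 : ((5 : ℕ) : ZMod n) ^ 2 = 1 := by
      simpa using congrArg Units.val (H (unitOfCoprime 5 hcop))
    rw [← natCast_eq_zero_iff]
    linear_combination h25

end ZMod

def unitPoint {n : ℕ} (u : (ZMod n)ˣ) : ℝ × ℝ :=
  (((u : ZMod n).val : ℝ), (((u⁻¹ : (ZMod n)ˣ) : ZMod n).val : ℝ))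

section UnitPoint

variable {n : ℕ}

theorem unitPoint_inv (u : (ZMod n)ˣ) : unitPoint u⁻¹ = (unitPoint u).swap := by
  simp [unitPoint]

theorem unitPoint_one [Fact (1 < n)] : unitPoint (1 : (ZMod n)ˣ) = (1, 1) := by
  simp [unitPoint, ZMod.val_one]

theorem unitPoint_fst_eq_snd_iff [NeZero n] (u : (ZMod n)ˣ) :
    (unitPoint u).1 = (unitPoint u).2 ↔ u ^ 2 = 1 := by
  simp only [unitPoint, Nat.cast_inj, (ZMod.val_injective n).eq_iff, Units.val_inj, sq,
    mul_eq_one_iff_eq_inv]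

theorem range_unitPoint (hn : 1 < n) : Set.range (unitPoint (n := n)) = modPoints n := by
  have : NeZero n := ⟨by omega⟩
  have : Fact (1 < n) := ⟨hn⟩
  ext p
  constructor
  · rintro ⟨u, rfl⟩
    have hval (v : (ZMod n)ˣ) : 1 ≤ ((v : ZMod n).val : ℤ) ∧ ((v : ZMod n).val : ℤ) ≤ n - 1 := by
      have h0 := ZMod.val_pos.2 v.ne_zero
      have := ZMod.val_lt (v : ZMod n)
      omega
    refine ⟨_, _, (hval u).1, (hval u).2, (hval u⁻¹).1, (hval u⁻¹).2, ?_, by simp [unitPoint]⟩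
    rw [← ZMod.intCast_zmod_eq_zero_iff_dvd]
    simp
  · rintro ⟨a, b, ha1, ha2, hb1, hb2, hab, rfl⟩
    have hab' : (a : ZMod n) * b = 1 := by
      rw [← sub_eq_zero]; exact_mod_cast (ZMod.intCast_zmod_eq_zero_iff_dvd _ _).2 hab
    refine ⟨⟨a, b, hab', by rw [mul_comm, hab']⟩, ?_⟩
    have hval (c : ℤ) (h1 : 1 ≤ c) (h2 : c ≤ n - 1) : (((c : ZMod n).val : ℕ) : ℝ) = c := by
      have := ZMod.val_intCast (n := n) c
      rw [Int.emod_eq_of_lt (by omega) (by omega)] at this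
      exact_mod_cast this
    simp [unitPoint, hval a ha1 ha2, hval b hb1 hb2]

end UnitPoint

theorem affineSpan_modPoints_eq_top_iff {n : ℕ} (hn : 1 < n) :
    affineSpan ℝ (modPoints n) = ⊤ ↔ ∃ u : (ZMod n)ˣ, u ^ 2 ≠ 1 := by
  have : Fact (1 < n) := ⟨hn⟩
  rw [← range_unitPoint hn]
  constructor
  · contrapose!
    intro H htop
    have hdiag : Set.range (unitPoint (n := n)) ⊆
        (LinearMap.eqLocus (LinearMap.fst ℝ ℝ ℝ) (LinearMap.snd ℝ ℝ ℝ)).toAffineSubspace := by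
      rintro _ ⟨u, rfl⟩
      exact (unitPoint_fst_eq_snd_iff u).2 (H u)
    have h10 := affineSpan_le.2 hdiag (htop ▸ AffineSubspace.mem_top ℝ _ ((1, 0) : ℝ × ℝ))
    simp at h10
  · rintro ⟨u, hu⟩
    refine affineSpan_eq_top_of_linearIndependent_vsub (Set.mem_range_self 1)
      (Set.mem_range_self u) (Set.mem_range_self u⁻¹) ?_ (by simp)
    rw [unitPoint_inv, unitPoint_one]
    refine linearIndependent_pair_swap (v := unitPoint u -ᵥ (1, 1)) ?_
    have hA := ZMod.val_pos.2 (u : (ZMod n)ˣ).ne_zero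
    have hB := ZMod.val_pos.2 (u⁻¹ : (ZMod n)ˣ).ne_zero
    have hAB := (unitPoint_fst_eq_snd_iff u).not.2 hu
    simp only [unitPoint] at hAB ⊢
    rw [vsub_eq_sub, Prod.fst_sub, Prod.snd_sub, Ne, sq_eq_sq₀, sub_left_inj]
    exacts [hAB, sub_nonneg.2 (Nat.one_le_cast.2 hA), sub_nonneg.2 (Nat.one_le_cast.2 hB)]

theorem stmt1 (n : ℕ) (hn : 2 ≤ n) :
    volume (modHull n) = 0 ↔ n ∈ ({2, 3, 4, 6, 8, 12, 24} : Set ℕ) := by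
  have : NeZero n := ⟨by omega⟩
  rw [modHull, addHaar_convexHull_eq_zero_iff, Ne, affineSpan_modPoints_eq_top_iff hn]
  simp only [not_exists, not_not]
  rw [ZMod.forall_units_sq_eq_one_iff_dvd_24]
  constructor
  · intro h
    have := Nat.le_of_dvd (by norm_num) h
    interval_cases n <;> simp_all
  · rintro (rfl | rfl | rfl | rfl | rfl | rfl | rfl) <;> norm_num
end
end

section
/- Let n ≥ 2 be an integer and let (a, b) be a vertex of C_n with a ≤ b, a + b ≤ n, and (a, b) ≠ (1, 1). Then a < b. -/
/-!
Suppose `a = b`, so that `(a, a)` is a vertex with `2 ≤ a` and `2a ≤ n`. Then `2a = n` is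
impossible, since `a ∣ n` and `n ∣ a² - 1` would force `a ∣ 1`. Hence `c = n - a > a`, and
`(c, c)` again lies in `G_n` because `c² ≡ a² ≡ 1 (mod n)`. So `(a, a)` lies strictly between
the points `(1, 1)` and `(c, c)` of `G_n` and is not extreme.
-/

open Filter MeasureTheory

noncomputable section

lemma mk_mem_modPoints_iff {n : ℕ} {a b : ℤ} :
    ((a : ℝ), (b : ℝ)) ∈ modPoints n ↔
      1 ≤ a ∧ a ≤ (n : ℤ) - 1 ∧ 1 ≤ b ∧ b ≤ (n : ℤ) - 1 ∧ (n : ℤ) ∣ a * b - 1 := by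
  constructor
  · rintro ⟨a', b', h⟩
    simp only [Prod.mk.injEq, Int.cast_inj] at h
    obtain ⟨h₁, h₂, h₃, h₄, h₅, rfl, rfl⟩ := h
    exact ⟨h₁, h₂, h₃, h₄, h₅⟩
  · rintro ⟨h₁, h₂, h₃, h₄, h₅⟩
    exact ⟨a, b, h₁, h₂, h₃, h₄, h₅, rfl⟩

lemma one_one_mem_modPoints {n : ℕ} (hn : 2 ≤ n) : ((1 : ℝ), (1 : ℝ)) ∈ modPoints n :=
  ⟨1, 1, le_rfl, by omega, le_rfl, by omega, by simp, by simp⟩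

lemma sub_mk_sub_mem_modPoints {n : ℕ} {a b : ℤ} (h : ((a : ℝ), (b : ℝ)) ∈ modPoints n) :
    ((((n : ℤ) - a : ℤ) : ℝ), (((n : ℤ) - b : ℤ) : ℝ)) ∈ modPoints n := by
  obtain ⟨h₁, h₂, h₃, h₄, h₅⟩ := mk_mem_modPoints_iff.1 h
  refine mk_mem_modPoints_iff.2 ⟨by omega, by omega, by omega, by omega, ?_⟩
  have : (n - a) * (n - b) - 1 = n * (n - a - b) + (a * b - 1) := by ring
  rw [this]
  exact dvd_add (dvd_mul_right _ _) h₅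

lemma dvd_one_of_dvd_of_dvd_mul_sub_one {R : Type*} [CommRing R] {a b n : R}
    (ha : a ∣ n) (hn : n ∣ a * b - 1) : a ∣ 1 := by
  simpa using dvd_sub (dvd_mul_right a b) (ha.trans hn)

lemma Prod.mk_self_mem_openSegment {𝕜 E : Type*} [Semiring 𝕜] [PartialOrder 𝕜]
    [AddCommMonoid E] [Module 𝕜 E] {x y z : E} (h : y ∈ openSegment 𝕜 x z) :
    (y, y) ∈ openSegment 𝕜 (x, x) (z, z) := by
  obtain ⟨s, t, hs, ht, hst, rfl⟩ := h
  exact ⟨s, t, hs, ht, hst, by simp⟩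

theorem stmt2_general (n : ℕ) (a b : ℤ)
    (hv : ((a : ℝ), (b : ℝ)) ∈ modVertices n)
    (hab : a ≤ b) (hsum : a + b ≤ (n : ℤ)) (hne : ¬(a = 1 ∧ b = 1)) :
    a < b := by
  refine hab.lt_of_ne fun hba => ?_
  subst hba
  have hmem : ((a : ℝ), (a : ℝ)) ∈ modPoints n := extremePoints_convexHull_subset hv
  obtain ⟨ha₁, han, -, -, hdvd⟩ := mk_mem_modPoints_iff.1 hmem
  have ha₂ : 2 ≤ a := by omega
  have htwo_mul_ne : 2 * a ≠ n := fun h => by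
    have := Int.eq_one_of_dvd_one (by omega) (dvd_one_of_dvd_of_dvd_mul_sub_one ⟨2, by omega⟩ hdvd)
    omega
  have hseg : ((a : ℝ), (a : ℝ)) ∈
      openSegment ℝ ((1 : ℝ), (1 : ℝ)) (((n - a : ℤ) : ℝ), ((n - a : ℤ) : ℝ)) := by
    refine Prod.mk_self_mem_openSegment ?_
    rw [openSegment_eq_Ioo (by exact_mod_cast (by omega : (1 : ℤ) < n - a))]
    exact ⟨by exact_mod_cast (by omega : (1 : ℤ) < a), by exact_mod_cast (by omega : a < n - a)⟩
  have hend := hv.2 (subset_convexHull ℝ _ (one_one_mem_modPoints (by omega)))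
    (subset_convexHull ℝ _ (sub_mk_sub_mem_modPoints hmem)) hseg
  have h₂ : (a : ℝ) = 1 := (congrArg Prod.fst hend).symm
  exact (by omega : a ≠ 1) (mod_cast h₂)

theorem stmt2 (n : ℕ) (hn : 2 ≤ n) (a b : ℤ)
    (hv : ((a : ℝ), (b : ℝ)) ∈ modVertices n)
    (hab : a ≤ b) (hsum : a + b ≤ (n : ℤ)) (hne : ¬(a = 1 ∧ b = 1)) :
    a < b :=
  stmt2_general n a b hv hab hsum hne
end
end

section
/- Let n ≥ 2 be an integer and let (a, b) be a point of G_n such that a(n − b) = n − 1 or b(n − a) = n − 1. Then (a, b) is a vertex of C_n. Consequently every divisor d of n − 1 with 1 ≤ d ≤ n − 1 gives rise to the vertex (d, n − (n−1)/d) of C_n. -/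
open Filter MeasureTheory

noncomputable section

/-!
Every point `(a, b)` of `G_n` satisfies `a (n - b) ≥ n - 1`, because `a (n - b) + 1 ≡ 1 - ab ≡ 0`
modulo `n` and is positive. Hence `C_n` lies in the hypograph of the strictly concave function
`x ↦ n - (n - 1) / x` on `x > 0`, and every point of `G_n` on its graph is an extreme point of the
hypograph, hence of `C_n`. The condition `b (n - a) = n - 1` reduces to this one through the
symmetry `(a, b) ↦ (b, a)` of `G_n`, and a factorisation `n - 1 = d e` gives the point
`(d, n - e)` on the graph.
-/

open Set

theorem StrictConcaveOn.mem_extremePoints_hypograph {𝕜 E : Type*} [Field 𝕜] [LinearOrder 𝕜]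
    [IsStrictOrderedRing 𝕜] [AddCommGroup E] [Module 𝕜 E] {s : Set E} {f : E → 𝕜}
    (hf : StrictConcaveOn 𝕜 s f) {x : E} (hx : x ∈ s) :
    (x, f x) ∈ extremePoints 𝕜 {p : E × 𝕜 | p.1 ∈ s ∧ p.2 ≤ f p.1} := by
  refine ⟨⟨hx, le_rfl⟩, ?_⟩
  rintro ⟨y, r⟩ ⟨hy, hr⟩ ⟨z, t⟩ ⟨hz, ht⟩ ⟨a, b, ha, hb, hab, hyz⟩
  simp only [Prod.smul_mk, Prod.mk_add_mk, Prod.mk.injEq, smul_eq_mul] at hyz hr ht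
  obtain ⟨rfl, hrt⟩ := hyz
  obtain rfl : y = z := by
    by_contra hne
    have hlt := hf.2 hy hz hne ha hb hab
    simp only [smul_eq_mul] at hlt
    nlinarith [mul_le_mul_of_nonneg_left hr ha.le, mul_le_mul_of_nonneg_left ht hb.le]
  rw [Convex.combo_self hab] at hrt ⊢
  have hfy : f y = a * f y + b * f y := by rw [← add_mul, hab, one_mul]
  refine congrArg _ (le_antisymm hr (le_of_not_gt fun hlt ↦ ?_))
  linarith [mul_lt_mul_of_pos_left hlt ha, mul_le_mul_of_nonneg_left ht hb.le]

theorem strictConcaveOn_const_sub_div {c : ℝ} (hc : 0 < c) (m : ℝ) :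
    StrictConcaveOn ℝ (Ioi 0) fun x ↦ m - c / x := by
  refine ⟨convex_Ioi 0, fun x hx y hy hxy a b ha hb hab ↦ ?_⟩
  have hinv := (strictConvexOn_zpow (m := -1) (by norm_num) (by norm_num)).2 hx hy hxy ha hb hab
  simp only [zpow_neg_one, smul_eq_mul] at hinv ⊢
  simp only [div_eq_mul_inv]
  have hm : m = a * m + b * m := by rw [← add_mul, hab, one_mul]
  nlinarith [mul_lt_mul_of_pos_left hinv hc]

theorem sub_one_le_mul_sub_of_dvd {n a b : ℤ} (ha : 1 ≤ a) (hb : b < n) (hd : n ∣ a * b - 1) :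
    n - 1 ≤ a * (n - b) := by
  obtain ⟨k, hk⟩ := hd
  have hdvd : n ∣ a * (n - b) + 1 := ⟨a - k, by linear_combination -hk⟩
  have := Int.le_of_dvd (by nlinarith) hdvd
  linarith

theorem modHull_subset_hypograph {n : ℕ} (hn : 2 ≤ n) :
    modHull n ⊆ {p : ℝ × ℝ | p.1 ∈ Ioi 0 ∧ p.2 ≤ n - (n - 1) / p.1} := by
  refine convexHull_min ?_ (strictConcaveOn_const_sub_div ?_ _).concaveOn.convex_hypograph
  · rintro _ ⟨a, b, ha, -, -, hb, hd, rfl⟩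
    have ha' : (0 : ℝ) < a := by exact_mod_cast ha
    have hab : ((n : ℤ) - 1 : ℝ) ≤ a * (n - b) := by
      exact_mod_cast sub_one_le_mul_sub_of_dvd ha (by omega) hd
    refine ⟨ha', ?_⟩
    rw [le_sub_comm, div_le_iff₀ ha']
    simpa [mul_comm] using hab
  · exact sub_pos.2 (Nat.one_lt_cast.2 hn)

theorem mk_mem_modVertices_of_mul_sub_eq {n : ℕ} (hn : 2 ≤ n) {a b : ℤ} (ha₁ : 1 ≤ a)
    (ha₂ : a ≤ (n : ℤ) - 1) (hb₁ : 1 ≤ b) (hb₂ : b ≤ (n : ℤ) - 1) (hd : (n : ℤ) ∣ a * b - 1)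
    (hab : a * ((n : ℤ) - b) = (n : ℤ) - 1) :
    ((a : ℝ), (b : ℝ)) ∈ modVertices n := by
  have ha : (0 : ℝ) < a := by exact_mod_cast ha₁
  have hb : (b : ℝ) = n - (n - 1) / a := by
    rw [eq_sub_iff_add_eq, ← eq_sub_iff_add_eq', div_eq_iff ha.ne']
    exact_mod_cast (by linear_combination -hab : (n : ℤ) - 1 = (n - b) * a)
  have hext := (strictConcaveOn_const_sub_div (sub_pos.2 (Nat.one_lt_cast.2 hn)) n)
    |>.mem_extremePoints_hypograph (mem_Ioi.2 ha)
  rw [← hb] at hext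
  exact inter_extremePoints_subset_extremePoints_of_subset (modHull_subset_hypograph hn)
    ⟨subset_convexHull ℝ _ ⟨a, b, ha₁, ha₂, hb₁, hb₂, hd, rfl⟩, hext⟩

theorem swap_mem_modPoints {n : ℕ} {p : ℝ × ℝ} (hp : p ∈ modPoints n) : p.swap ∈ modPoints n := by
  obtain ⟨a, b, ha₁, ha₂, hb₁, hb₂, hd, rfl⟩ := hp
  exact ⟨b, a, hb₁, hb₂, ha₁, ha₂, mul_comm a b ▸ hd, rfl⟩

theorem swap_mem_modVertices {n : ℕ} {p : ℝ × ℝ} (hp : p ∈ modVertices n) :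
    p.swap ∈ modVertices n := by
  have hswap : LinearEquiv.prodComm ℝ ℝ ℝ '' modPoints n = modPoints n :=
    Subset.antisymm (image_subset_iff.2 fun _ ↦ swap_mem_modPoints)
      fun q hq ↦ ⟨q.swap, swap_mem_modPoints hq, q.swap_swap⟩
  have hhull : LinearEquiv.prodComm ℝ ℝ ℝ '' modHull n = modHull n := by
    have h := (LinearEquiv.prodComm ℝ ℝ ℝ).toLinearMap.image_convexHull (modPoints n)
    rwa [LinearEquiv.coe_coe, hswap] at h
  rw [modVertices, ← hhull, ← image_extremePoints]
  exact mem_image_of_mem _ hp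

theorem stmt6 (n : ℕ) (hn : 2 ≤ n) :
    (∀ a b : ℤ, 1 ≤ a → a ≤ (n : ℤ) - 1 → 1 ≤ b → b ≤ (n : ℤ) - 1 →
      (n : ℤ) ∣ a * b - 1 →
      (a * ((n : ℤ) - b) = (n : ℤ) - 1 ∨ b * ((n : ℤ) - a) = (n : ℤ) - 1) →
      ((a : ℝ), (b : ℝ)) ∈ modVertices n) ∧
    (∀ d : ℕ, d ∣ n - 1 → 1 ≤ d →
      ((d : ℝ), (n : ℝ) - (((n - 1) / d : ℕ) : ℝ)) ∈ modVertices n) := by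
  refine ⟨fun a b ha₁ ha₂ hb₁ hb₂ hd hab ↦ ?_, fun d hd hd₁ ↦ ?_⟩
  · rcases hab with hab | hab
    · exact mk_mem_modVertices_of_mul_sub_eq hn ha₁ ha₂ hb₁ hb₂ hd hab
    · exact swap_mem_modVertices
        (mk_mem_modVertices_of_mul_sub_eq hn hb₁ hb₂ ha₁ ha₂ (mul_comm a b ▸ hd) hab)
  · obtain ⟨e, he⟩ := hd
    rw [he, Nat.mul_div_cancel_left e hd₁]
    have he₁ : 0 < e := Nat.pos_of_ne_zero fun h ↦ by simp [h] at he; omega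
    have hde : (d : ℤ) * e = n - 1 := by omega
    exact_mod_cast mk_mem_modVertices_of_mul_sub_eq hn (a := d) (b := n - e) (by omega)
      (by nlinarith) (by nlinarith) (by omega) ⟨d - 1, by linear_combination -hde⟩
      (by linear_combination hde)
end
end

section
/- Let n ≥ 3 be an integer such that T(n−1) ≤ 5. Then v(n) = 2(τ(n−1) − 1). In particular this holds for all n of the form n = 2^r·3^s·5^t + 1 with nonnegative integers r, s, t (with n ≥ 3). -/
open Filter MeasureTheory

noncomputable section

/-- `v(n)`, the number of vertices of `C_n`. -/
def numVertices (n : ℕ) : ℕ := (modVertices n).ncard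

/-- `T(s)`, the maximal ratio `d_{i+1}/d_i` of consecutive divisors of `s`. -/
def Tratio (s : ℕ) : ℝ :=
  sSup {r : ℝ | ∃ d e : ℕ, d ∣ s ∧ e ∣ s ∧ d < e ∧
    (∀ f : ℕ, f ∣ s → ¬(d < f ∧ f < e)) ∧ r = (e : ℝ) / (d : ℝ)}

/-!
Write `n = s + 1`. For `(a, b) ∈ G_n` the positive integer `a (n - b)` is `≡ -1 (mod n)`, so either
`a (n - b) = s`, i.e. `(a, b) = (d, n - s / d)` lies on the hyperbola `x (n - y) = s` with `d ∣ s`,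
or `a (n - b) ≥ 2 s + 1`. The symmetry `(a, b) ↦ (n - a, n - b)` of `G_n` gives a second family,
and the `2 τ(s) - 2` points of the two families (they share `(1, 1)` and `(s, s)`) are the
vertices of `C_n`: by AM-GM each is the unique minimiser on `G_n` of a linear functional whose
level lines are parallel to the tangent of its hyperbola. Every other point of `G_n` lies below
the chord of the first family over consecutive divisors `d ≤ a < e` of `s`, and above the mirror
image of such a chord, because the chord stays above the curve `x (n - y) = 2 s + 1`:
`x (d + e - x) ≤ (d + e)² / 4 ≤ 2 d e` as soon as `e ≤ 5 d`, which is where `T(s) ≤ 5` enters.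
-/

section ConvexGeometry

variable {E : Type*} [AddCommGroup E] [Module ℝ E]

theorem convex_insert_halfSpace_gt (f : E →ₗ[ℝ] ℝ) (p : E) :
    Convex ℝ (insert p {q | f p < f q}) := by
  rw [convex_iff_forall_pos]
  intro x hx y hy a b ha hb hab
  have hx' : f p ≤ f x := by rcases hx with rfl | h; exacts [le_rfl, h.le]
  have hy' : f p ≤ f y := by rcases hy with rfl | h; exacts [le_rfl, h.le]
  by_cases hxy : x = p ∧ y = p
  · rw [hxy.1, hxy.2]
    exact Or.inl (Convex.combo_self hab p)
  · right
    have hlt : f p < f x ∨ f p < f y := by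
      rw [not_and_or] at hxy
      exact hxy.imp (hx.resolve_left) (hy.resolve_left)
    have hfp : a * f p + b * f p = f p := by rw [← add_mul, hab, one_mul]
    simp only [Set.mem_ofPred_eq, map_add, map_smul, smul_eq_mul]
    rcases hlt with h | h
    · linarith [mul_lt_mul_of_pos_left h ha, mul_le_mul_of_nonneg_left hy' hb.le]
    · linarith [mul_le_mul_of_nonneg_left hx' ha.le, mul_lt_mul_of_pos_left h hb]

theorem mem_extremePoints_convexHull_of_forall_lt {S : Set E} {p : E} (f : E →ₗ[ℝ] ℝ)
    (hp : p ∈ S) (hlt : ∀ q ∈ S, q ≠ p → f p < f q) :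
    p ∈ (convexHull ℝ S).extremePoints ℝ := by
  have hK : convexHull ℝ S ⊆ insert p {q | f p < f q} :=
    convexHull_min (fun q hq ↦ (eq_or_ne q p).imp id (hlt q hq)) (convex_insert_halfSpace_gt f p)
  have hsdiff : convexHull ℝ S \ {p} = convexHull ℝ S ∩ {q | f p < f q} := by
    ext q
    constructor
    · rintro ⟨hq, hqp⟩
      exact ⟨hq, (hK hq).resolve_left hqp⟩
    · rintro ⟨hq, hfq⟩
      refine ⟨hq, fun hqp ↦ ?_⟩
      rw [Set.mem_singleton_iff.mp hqp] at hfq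
      exact lt_irrefl (f p) hfq
  rw [(convex_convexHull ℝ S).mem_extremePoints_iff_convex_sdiff, hsdiff]
  exact ⟨subset_convexHull ℝ S hp,
    (convex_convexHull ℝ S).inter (convex_halfSpace_gt f.isLinear _)⟩

theorem sub_mem_convexHull {S : Set E} {c p : E} (hS : ∀ q ∈ S, c - q ∈ S)
    (hp : p ∈ convexHull ℝ S) : c - p ∈ convexHull ℝ S := by
  let ρ : E →ᵃ[ℝ] E := AffineMap.const ℝ E c - AffineMap.id ℝ E
  have hρ : convexHull ℝ S ⊆ ρ ⁻¹' convexHull ℝ S :=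
    convexHull_min (fun q hq ↦ subset_convexHull ℝ S (hS q hq))
      ((convex_convexHull ℝ S).affine_preimage ρ)
  exact hρ hp

theorem Convex.mk_mem_of_le {C : Set (E × ℝ)} (hC : Convex ℝ C) {x : E} {l y u : ℝ}
    (hl : (x, l) ∈ C) (hu : (x, u) ∈ C) (hly : l ≤ y) (hyu : y ≤ u) : (x, y) ∈ C := by
  refine hC.segment_subset hl hu ?_
  rw [← Prod.image_mk_segment_right, segment_eq_Icc (hly.trans hyu)]
  exact ⟨y, ⟨hly, hyu⟩, rfl⟩

end ConvexGeometry

section Divisors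

theorem eq_or_two_mul_le_of_dvd {m n : ℤ} (hm : 0 < m) (h : n ∣ m) : m = n ∨ 2 * n ≤ m := by
  obtain ⟨k, rfl⟩ := h
  rcases le_or_gt n 0 with hn | hn
  · exact Or.inr (by linarith)
  have hk : 0 < k := pos_of_mul_pos_right hm hn.le
  rcases (show k = 1 ∨ 2 ≤ k by omega) with rfl | hk2
  · exact Or.inl (mul_one n)
  · exact Or.inr (by nlinarith)

theorem exists_consecutive_divisors_around {s : ℕ} (hs : s ≠ 0) {x : ℝ} (h1 : 1 ≤ x)
    (hx : x < s) :
    ∃ d e : ℕ, d ∣ s ∧ e ∣ s ∧ (d : ℝ) ≤ x ∧ x < e ∧ ∀ f : ℕ, f ∣ s → ¬(d < f ∧ f < e) := by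
  classical
  let D := s.divisors.filter fun f : ℕ ↦ (f : ℝ) ≤ x
  let U := s.divisors.filter fun f : ℕ ↦ x < f
  have hD : 1 ∈ D := Finset.mem_filter.mpr ⟨Nat.one_mem_divisors.mpr hs, by simpa using h1⟩
  have hU : s ∈ U := Finset.mem_filter.mpr ⟨Nat.mem_divisors_self s hs, hx⟩
  obtain ⟨hdD, hdx⟩ := Finset.mem_filter.mp (D.max'_mem ⟨1, hD⟩)
  obtain ⟨heU, hxe⟩ := Finset.mem_filter.mp (U.min'_mem ⟨s, hU⟩)
  refine ⟨_, _, Nat.dvd_of_mem_divisors hdD, Nat.dvd_of_mem_divisors heU, hdx, hxe, ?_⟩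
  rintro f hf ⟨hdf, hfe⟩
  have hfs : f ∈ s.divisors := Nat.mem_divisors.mpr ⟨hf, hs⟩
  rcases le_or_gt (f : ℝ) x with hfx | hfx
  · exact (D.le_max' f (Finset.mem_filter.mpr ⟨hfs, hfx⟩)).not_gt hdf
  · exact (U.min'_le f (Finset.mem_filter.mpr ⟨hfs, hfx⟩)).not_gt hfe

theorem div_le_Tratio {s d e : ℕ} (hs : s ≠ 0) (hd : d ∣ s) (he : e ∣ s) (hde : d < e)
    (hcons : ∀ f : ℕ, f ∣ s → ¬(d < f ∧ f < e)) : (e : ℝ) / d ≤ Tratio s := by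
  refine le_csSup ⟨s, ?_⟩ ⟨d, e, hd, he, hde, hcons, rfl⟩
  rintro _ ⟨d', e', hd', he', -, -, rfl⟩
  have hd'1 : (1 : ℝ) ≤ d' := by exact_mod_cast Nat.pos_of_dvd_of_pos hd' (Nat.pos_of_ne_zero hs)
  have he's : (e' : ℝ) ≤ s := by exact_mod_cast Nat.le_of_dvd (Nat.pos_of_ne_zero hs) he'
  exact (div_le_self (Nat.cast_nonneg e') hd'1).trans he's

theorem exists_divisors_around_of_Tratio_le {s : ℕ} (hs : s ≠ 0) {k : ℝ} (hT : Tratio s ≤ k)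
    {x : ℝ} (h1 : 1 ≤ x) (hx : x < s) :
    ∃ d e : ℕ, d ∣ s ∧ e ∣ s ∧ (d : ℝ) ≤ x ∧ x < e ∧ (e : ℝ) ≤ k * d := by
  obtain ⟨d, e, hd, he, hdx, hxe, hcons⟩ := exists_consecutive_divisors_around hs h1 hx
  have hd0 : (0 : ℝ) < d := by exact_mod_cast Nat.pos_of_dvd_of_pos hd (Nat.pos_of_ne_zero hs)
  have hde : d < e := by exact_mod_cast hdx.trans_lt hxe
  refine ⟨d, e, hd, he, hdx, hxe, ?_⟩
  rw [← div_le_iff₀ hd0]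
  exact (div_le_Tratio hs hd he hde hcons).trans hT

theorem Tratio_le_of_forall_prime_dvd_le {s k : ℕ} (hs : s ≠ 0)
    (hk : ∀ p : ℕ, p.Prime → p ∣ s → p ≤ k) : Tratio s ≤ k := by
  refine Real.sSup_le ?_ (Nat.cast_nonneg k)
  rintro _ ⟨d, e, ⟨m, rfl⟩, he, hde, hcons, rfl⟩
  have hd0 : 0 < d := Nat.pos_of_ne_zero (left_ne_zero_of_mul hs)
  have hm1 : m ≠ 1 := by
    rintro rfl
    exact (Nat.le_of_dvd hd0 (by simpa using he)).not_gt hde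
  obtain ⟨p, hp, hpm⟩ := Nat.exists_prime_and_dvd hm1
  have hep : e ≤ d * p := by
    by_contra! h
    exact hcons (d * p) (mul_dvd_mul_left d hpm) ⟨lt_mul_of_one_lt_right hd0 hp.one_lt, h⟩
  have hek : e ≤ k * d := by
    rw [mul_comm]
    exact hep.trans (Nat.mul_le_mul_left d (hk p hp (dvd_mul_of_dvd_right hpm d)))
  rw [div_le_iff₀ (by exact_mod_cast hd0)]
  exact_mod_cast hek

theorem Nat.Prime.le_five_of_dvd {p : ℕ} (hp : p.Prime) {r s t : ℕ}
    (h : p ∣ 2 ^ r * 3 ^ s * 5 ^ t) : p ≤ 5 := by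
  rcases hp.dvd_mul.mp h with h | h
  · rcases hp.dvd_mul.mp h with h | h
    · exact (Nat.le_of_dvd two_pos (hp.dvd_of_dvd_pow h)).trans (by norm_num)
    · exact (Nat.le_of_dvd three_pos (hp.dvd_of_dvd_pow h)).trans (by norm_num)
  · exact Nat.le_of_dvd (by norm_num) (hp.dvd_of_dvd_pow h)

end Divisors

def hyperbolaPoint (s : ℕ) (x : ℝ) : ℝ × ℝ := (x, s + 1 - s / x)

def corner (s : ℕ) : ℝ × ℝ := ((s : ℝ) + 1, (s : ℝ) + 1)

def upperVertices (s : ℕ) : Finset (ℝ × ℝ) := s.divisors.image fun d : ℕ ↦ hyperbolaPoint s d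

def vertexSet (s : ℕ) : Finset (ℝ × ℝ) :=
  upperVertices s ∪ (upperVertices s).image (corner s - ·)

section ModPoints

variable {s : ℕ} {p : ℝ × ℝ}

theorem mem_Icc_of_mem_modPoints (hp : p ∈ modPoints (s + 1)) :
    p.1 ∈ Set.Icc 1 (s : ℝ) ∧ p.2 ∈ Set.Icc 1 (s : ℝ) := by
  obtain ⟨a, b, ha1, ha2, hb1, hb2, -, rfl⟩ := hp
  push_cast at ha2 hb2
  have has : a ≤ s := by linarith
  have hbs : b ≤ s := by linarith
  dsimp only
  exact ⟨⟨by exact_mod_cast ha1, by exact_mod_cast has⟩, by exact_mod_cast hb1,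
    by exact_mod_cast hbs⟩

theorem corner_sub_mem_modPoints (hp : p ∈ modPoints (s + 1)) :
    corner s - p ∈ modPoints (s + 1) := by
  obtain ⟨a, b, ha1, ha2, hb1, hb2, hdvd, rfl⟩ := hp
  push_cast at ha2 hb2 hdvd
  refine ⟨s + 1 - a, s + 1 - b, ?_, ?_, ?_, ?_, ?_, ?_⟩ <;> push_cast
  any_goals linarith
  · have h : (s + 1 - a) * (s + 1 - b) - 1 = (s + 1) * (s + 1 - a - b) + (a * b - 1) := by ring
    rw [h]
    exact dvd_add (dvd_mul_right _ _) hdvd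
  · simp [corner]

theorem hyperbolaPoint_mem_modPoints {d : ℕ} (hd : d ∈ s.divisors) :
    hyperbolaPoint s d ∈ modPoints (s + 1) := by
  obtain ⟨⟨k, rfl⟩, hs⟩ := Nat.mem_divisors.mp hd
  have hd0 : 0 < d := Nat.pos_of_ne_zero (left_ne_zero_of_mul hs)
  have hk0 : 0 < k := Nat.pos_of_ne_zero (right_ne_zero_of_mul hs)
  refine ⟨d, d * k + 1 - k, by omega, ?_, ?_, ?_, ⟨d - 1, by push_cast; ring⟩, ?_⟩
  · push_cast; nlinarith
  · nlinarith
  · push_cast; nlinarith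
  · have hdR : (d : ℝ) ≠ 0 := by exact_mod_cast hd0.ne'
    refine Prod.ext rfl ?_
    simp only [hyperbolaPoint]
    field_simp
    push_cast
    ring

theorem mem_upperVertices_or_of_mem_modPoints (hp : p ∈ modPoints (s + 1)) :
    p ∈ upperVertices s ∨ 2 * s + 1 ≤ p.1 * (s + 1 - p.2) := by
  obtain ⟨a, b, ha1, ha2, hb1, hb2, hdvd, rfl⟩ := hp
  push_cast at ha2 hb2 hdvd
  have hdvd' : (s + 1 : ℤ) ∣ a * (s + 1 - b) + 1 := by
    have h : a * (s + 1 - b) + 1 = (s + 1) * a - (a * b - 1) := by ring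
    rw [h]
    exact dvd_sub (dvd_mul_right _ _) hdvd
  rcases eq_or_two_mul_le_of_dvd (by nlinarith) hdvd' with h | h
  · left
    lift a to ℕ using (by linarith)
    have hs : s ≠ 0 := by omega
    have hdvd_s : a ∣ s := Int.natCast_dvd_natCast.mp ⟨s + 1 - b, by linarith⟩
    refine Finset.mem_image.mpr ⟨a, Nat.mem_divisors.mpr ⟨hdvd_s, hs⟩, Prod.ext rfl ?_⟩
    have ha0 : (a : ℝ) ≠ 0 := by exact_mod_cast (show a ≠ 0 by omega)
    have hR : (a : ℝ) * (s + 1 - b) = s := by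
      exact_mod_cast (by linarith : (a : ℤ) * (s + 1 - b) = s)
    have hsa : (s : ℝ) / a = s + 1 - b := by rw [div_eq_iff ha0]; linear_combination -hR
    simp only [hyperbolaPoint, hsa]
    ring
  · right
    have hR : 2 * ((s : ℝ) + 1) ≤ a * (s + 1 - b) + 1 := by exact_mod_cast h
    dsimp only
    linarith

theorem le_mul_of_mem_modPoints (hp : p ∈ modPoints (s + 1)) : (s : ℝ) ≤ p.1 * (s + 1 - p.2) := by
  rcases mem_upperVertices_or_of_mem_modPoints hp with h | h
  · obtain ⟨d, hd, rfl⟩ := Finset.mem_image.mp h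
    have hd0 : (d : ℝ) ≠ 0 := by exact_mod_cast Nat.pos_of_mem_divisors hd |>.ne'
    simp only [hyperbolaPoint, sub_sub_cancel, mul_div_cancel₀ _ hd0, le_refl]
  · linarith [(Nat.cast_nonneg s : (0 : ℝ) ≤ s)]

theorem hyperbolaPoint_mem_vertexSet {d : ℕ} (hd : d ∈ s.divisors) :
    hyperbolaPoint s d ∈ vertexSet s :=
  Finset.mem_union_left _ (Finset.mem_image_of_mem _ hd)

theorem corner_sub_mem_vertexSet {q : ℝ × ℝ} (hq : q ∈ vertexSet s) :
    corner s - q ∈ vertexSet s := by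
  rcases Finset.mem_union.mp hq with hq | hq
  · exact Finset.mem_union_right _ (Finset.mem_image_of_mem _ hq)
  · obtain ⟨q', hq', rfl⟩ := Finset.mem_image.mp hq
    rw [sub_sub_cancel]
    exact Finset.mem_union_left _ hq'

theorem vertexSet_subset_modPoints : (vertexSet s : Set (ℝ × ℝ)) ⊆ modPoints (s + 1) := by
  intro q hq
  rcases Finset.mem_union.mp hq with hq | hq
  · obtain ⟨d, hd, rfl⟩ := Finset.mem_image.mp hq
    exact hyperbolaPoint_mem_modPoints hd
  · obtain ⟨_, hq', rfl⟩ := Finset.mem_image.mp hq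
    obtain ⟨d, hd, rfl⟩ := Finset.mem_image.mp hq'
    exact corner_sub_mem_modPoints (hyperbolaPoint_mem_modPoints hd)

end ModPoints

def tangentFunctional (s : ℕ) (d : ℝ) : ℝ × ℝ →ₗ[ℝ] ℝ :=
  ((s : ℝ) / d) • LinearMap.fst ℝ ℝ ℝ - d • LinearMap.snd ℝ ℝ ℝ

theorem tangentFunctional_apply (s : ℕ) (d : ℝ) (q : ℝ × ℝ) :
    tangentFunctional s d q = s / d * q.1 - d * q.2 := rfl

theorem tangentFunctional_lt {s : ℕ} (hs : 0 < s) {d : ℝ} (hd : 0 < d) {q : ℝ × ℝ}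
    (hq1 : 0 < q.1) (hq : s ≤ q.1 * (s + 1 - q.2)) (hne : q ≠ hyperbolaPoint s d) :
    tangentFunctional s d (hyperbolaPoint s d) < tangentFunctional s d q := by
  obtain ⟨a, b⟩ := q
  dsimp only at hq1 hq
  have hsR : (0 : ℝ) < s := by exact_mod_cast hs
  -- AM-GM in the form of an identity, using `a (s + 1 - b) ≥ s`
  have key : a * d * (tangentFunctional s d (a, b) - tangentFunctional s d (hyperbolaPoint s d)) =
      s * (a - d) ^ 2 + d ^ 2 * (a * (s + 1 - b) - s) := by
    simp only [tangentFunctional_apply, hyperbolaPoint]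
    field_simp
    ring
  by_contra! hle
  have h1 : 0 ≤ s * (a - d) ^ 2 := by positivity
  have h2 : 0 ≤ d ^ 2 * (a * (s + 1 - b) - s) := mul_nonneg (sq_nonneg d) (by linarith)
  have h12 : s * (a - d) ^ 2 + d ^ 2 * (a * (s + 1 - b) - s) ≤ 0 := by
    rw [← key]
    exact mul_nonpos_of_nonneg_of_nonpos (by positivity) (by linarith)
  have had : a = d := by
    have h : (s : ℝ) * (a - d) ^ 2 = 0 := by linarith
    simpa [hsR.ne', sub_eq_zero] using h
  subst had
  have hb : a * (s + 1 - b) = s := by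
    have h : a ^ 2 * (a * (s + 1 - b) - s) = 0 := by linarith
    simpa [hd.ne', sub_eq_zero] using h
  refine hne (Prod.ext rfl ?_)
  simp only [hyperbolaPoint]
  field_simp
  linarith

section Vertices

variable {s : ℕ}

theorem tangentFunctional_lt_of_mem_modPoints {d : ℕ} (hd : d ∈ s.divisors) {q : ℝ × ℝ}
    (hq : q ∈ modPoints (s + 1)) (hne : q ≠ hyperbolaPoint s d) :
    tangentFunctional s d (hyperbolaPoint s d) < tangentFunctional s d q :=
  tangentFunctional_lt (Nat.pos_of_ne_zero (Nat.mem_divisors.mp hd).2)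
    (by exact_mod_cast Nat.pos_of_mem_divisors hd)
    (by linarith [(mem_Icc_of_mem_modPoints hq).1.1]) (le_mul_of_mem_modPoints hq) hne

theorem vertexSet_subset_extremePoints :
    (vertexSet s : Set (ℝ × ℝ)) ⊆ (convexHull ℝ (vertexSet s : Set (ℝ × ℝ))).extremePoints ℝ := by
  intro p hp
  have hG := vertexSet_subset_modPoints (s := s)
  rcases Finset.mem_union.mp hp with hp' | hp'
  · obtain ⟨d, hd, rfl⟩ := Finset.mem_image.mp hp'
    exact mem_extremePoints_convexHull_of_forall_lt (tangentFunctional s d) hp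
      fun q hq hne ↦ tangentFunctional_lt_of_mem_modPoints hd (hG hq) hne
  · obtain ⟨_, hp'', rfl⟩ := Finset.mem_image.mp hp'
    obtain ⟨d, hd, rfl⟩ := Finset.mem_image.mp hp''
    refine mem_extremePoints_convexHull_of_forall_lt (-tangentFunctional s d) hp fun q hq hne ↦ ?_
    have h := tangentFunctional_lt_of_mem_modPoints hd (corner_sub_mem_modPoints (hG hq))
      (fun h ↦ hne (by rw [← h, sub_sub_cancel]))
    simp only [LinearMap.neg_apply, map_sub] at h ⊢
    linarith

theorem chord_mem_segment (s : ℕ) {d e x : ℝ} (hd : 0 < d) (hdx : d ≤ x) (hxe : x ≤ e)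
    (hde : d < e) :
    (x, s + 1 - s * (d + e - x) / (d * e)) ∈
      segment ℝ (hyperbolaPoint s d) (hyperbolaPoint s e) := by
  have he : 0 < e := hd.trans hde
  have hed : e - d ≠ 0 := (sub_pos.mpr hde).ne'
  refine ⟨(e - x) / (e - d), (x - d) / (e - d), div_nonneg (by linarith) (by linarith),
    div_nonneg (by linarith) (by linarith), by field_simp; ring, ?_⟩
  simp only [hyperbolaPoint, Prod.smul_mk, Prod.mk_add_mk, smul_eq_mul, Prod.mk.injEq]
  constructor
  · field_simp
    ring
  · field_simp
    ring

theorem chord_le_of_le_five_mul {s d e x y : ℝ} (hs : 0 ≤ s) (hd : 0 < d) (hdx : d ≤ x)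
    (hxe : x ≤ e) (he : e ≤ 5 * d) (hxy : 2 * s + 1 ≤ x * y) : s * (d + e - x) / (d * e) ≤ y := by
  have hx : 0 < x := hd.trans_le hdx
  have hde : 0 < d * e := mul_pos hd (by linarith)
  rw [div_le_iff₀ hde]
  -- `x (d + e - x) ≤ (d + e)² / 4 ≤ 2 d e`, the second step because `e ≤ 5 d < (3 + 2√2) d`
  have hsq : s * (x * (d + e - x)) ≤ s * (2 * (d * e)) := by
    refine mul_le_mul_of_nonneg_left ?_ hs
    nlinarith [sq_nonneg (d + e - 2 * x), mul_nonneg (by linarith : 0 ≤ 5 * d - e)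
      (by linarith : 0 ≤ e - d)]
  refine le_of_mul_le_mul_left ?_ hx
  nlinarith

theorem exists_le_mem_convexHull_vertexSet (hT : Tratio s ≤ 5) {x y : ℝ} (hx1 : 1 ≤ x)
    (hxs : x < s) (hxy : 2 * s + 1 ≤ x * (s + 1 - y)) :
    ∃ c, y ≤ c ∧ (x, c) ∈ convexHull ℝ (vertexSet s : Set (ℝ × ℝ)) := by
  have hs : s ≠ 0 := by rintro rfl; simp at hxs; linarith
  obtain ⟨d, e, hd, he, hdx, hxe, he5⟩ := exists_divisors_around_of_Tratio_le hs hT hx1 hxs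
  have hd0 : (0 : ℝ) < d := by exact_mod_cast Nat.pos_of_dvd_of_pos hd (Nat.pos_of_ne_zero hs)
  have hmem : ∀ f : ℕ, f ∣ s → hyperbolaPoint s f ∈ convexHull ℝ (vertexSet s : Set (ℝ × ℝ)) :=
    fun f hf ↦ subset_convexHull ℝ _ (hyperbolaPoint_mem_vertexSet (Nat.mem_divisors.mpr ⟨hf, hs⟩))
  refine ⟨_, ?_, (convex_convexHull ℝ _).segment_subset (hmem d hd) (hmem e he)
    (chord_mem_segment s hd0 hdx hxe.le (hdx.trans_lt hxe))⟩
  linarith [chord_le_of_le_five_mul (Nat.cast_nonneg s) hd0 hdx hxe.le he5 hxy]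

theorem modPoints_subset_convexHull_vertexSet (hT : Tratio s ≤ 5) :
    modPoints (s + 1) ⊆ convexHull ℝ (vertexSet s : Set (ℝ × ℝ)) := by
  intro p hp
  have hsub := subset_convexHull ℝ (vertexSet s : Set (ℝ × ℝ))
  rcases mem_upperVertices_or_of_mem_modPoints hp with hup | hup
  · exact hsub (Finset.mem_union_left _ hup)
  rcases mem_upperVertices_or_of_mem_modPoints (corner_sub_mem_modPoints hp) with hlow | hlow
  · exact hsub (Finset.mem_union_right _ (Finset.mem_image.mpr ⟨_, hlow, sub_sub_cancel _ _⟩))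
  obtain ⟨a, b⟩ := p
  obtain ⟨⟨ha1, has⟩, hb1, hbs⟩ := mem_Icc_of_mem_modPoints hp
  simp only [corner, Prod.mk_sub_mk, sub_sub_cancel] at hlow hup ha1 has hb1 hbs
  obtain ⟨c, hbc, hc⟩ := exists_le_mem_convexHull_vertexSet hT ha1 (by nlinarith) hup
  obtain ⟨c', hbc', hc'⟩ := exists_le_mem_convexHull_vertexSet (x := s + 1 - a) (y := s + 1 - b)
    hT (by linarith) (by nlinarith) (by linarith)
  have hc'' := sub_mem_convexHull (fun q hq ↦ corner_sub_mem_vertexSet hq) hc'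
  simp only [corner, Prod.mk_sub_mk, sub_sub_cancel] at hc''
  exact (convex_convexHull ℝ _).mk_mem_of_le hc'' hc (by linarith) hbc

end Vertices

section Count

variable {s : ℕ}

theorem hyperbolaPoint_one : hyperbolaPoint s 1 = (1, 1) := by
  simp [hyperbolaPoint]

theorem hyperbolaPoint_self (hs : s ≠ 0) : hyperbolaPoint s s = ((s : ℝ), (s : ℝ)) := by
  have : (s : ℝ) ≠ 0 := by exact_mod_cast hs
  simp [hyperbolaPoint, this]

theorem eq_one_or_eq_of_hyperbolaPoint_eq_corner_sub {c d : ℕ} (hc : c ∈ s.divisors)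
    (hd : d ∈ s.divisors) (h : hyperbolaPoint s d = corner s - hyperbolaPoint s c) :
    d = 1 ∨ d = s := by
  have hc0 : (c : ℝ) ≠ 0 := by exact_mod_cast (Nat.pos_of_mem_divisors hc).ne'
  have hd0 : (d : ℝ) ≠ 0 := by exact_mod_cast (Nat.pos_of_mem_divisors hd).ne'
  have hn0 : (s : ℝ) + 1 ≠ 0 := by positivity
  simp only [hyperbolaPoint, corner, Prod.mk_sub_mk, Prod.mk.injEq] at h
  obtain ⟨h1, h2⟩ := h
  have hsum : (d : ℝ) + c = s + 1 := by linarith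
  have hprod : (d : ℝ) * c = s := by
    field_simp at h2
    refine mul_left_cancel₀ hn0 ?_
    linear_combination h2 + (s : ℝ) * hsum
  have : ((d : ℝ) - 1) * (d - s) = 0 := by linear_combination (d : ℝ) * hsum - hprod
  rcases mul_eq_zero.mp this with h | h
  · left; exact_mod_cast sub_eq_zero.mp h
  · right; exact_mod_cast sub_eq_zero.mp h

theorem upperVertices_inter_image_corner_sub (hs : s ≠ 0) :
    upperVertices s ∩ (upperVertices s).image (corner s - ·) =
      {((1 : ℝ), (1 : ℝ)), ((s : ℝ), (s : ℝ))} := by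
  ext p
  simp only [Finset.mem_inter, Finset.mem_insert, Finset.mem_singleton, Finset.mem_image,
    upperVertices]
  constructor
  · rintro ⟨⟨d, hd, rfl⟩, _, ⟨c, hc, rfl⟩, h⟩
    rcases eq_one_or_eq_of_hyperbolaPoint_eq_corner_sub hc hd h.symm with rfl | rfl
    · exact Or.inl (by simpa using hyperbolaPoint_one)
    · exact Or.inr (hyperbolaPoint_self hs)
  · have h1 := Nat.one_mem_divisors.mpr hs
    have hss := Nat.mem_divisors_self s hs
    rintro (rfl | rfl)
    · refine ⟨⟨1, h1, by simpa using hyperbolaPoint_one⟩, _, ⟨s, hss, rfl⟩, ?_⟩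
      simp [hyperbolaPoint_self hs, corner]
    · refine ⟨⟨s, hss, hyperbolaPoint_self hs⟩, _, ⟨1, h1, rfl⟩, ?_⟩
      simp [hyperbolaPoint_one, corner]

theorem card_vertexSet (hs : 2 ≤ s) : (vertexSet s).card = 2 * (s.divisors.card - 1) := by
  have hcard : (upperVertices s).card = s.divisors.card :=
    Finset.card_image_of_injective _ fun c d h ↦ by simpa [hyperbolaPoint] using congrArg Prod.fst h
  have hcard' : ((upperVertices s).image (corner s - ·)).card = s.divisors.card := by
    rw [Finset.card_image_of_injective _ sub_right_injective, hcard]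
  have hinter : (upperVertices s ∩ (upperVertices s).image (corner s - ·)).card = 2 := by
    rw [upperVertices_inter_image_corner_sub (by omega), Finset.card_pair]
    simp only [ne_eq, Prod.mk.injEq, and_self]
    exact_mod_cast (by omega : 1 ≠ s)
  have := Finset.card_union_add_card_inter (upperVertices s)
    ((upperVertices s).image (corner s - ·))
  rw [vertexSet]
  omega

end Count

theorem modVertices_eq_vertexSet {s : ℕ} (hT : Tratio s ≤ 5) :
    modVertices (s + 1) = vertexSet s := by
  have hull : modHull (s + 1) = convexHull ℝ (vertexSet s : Set (ℝ × ℝ)) :=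
    (convexHull_min (modPoints_subset_convexHull_vertexSet hT) (convex_convexHull ℝ _)).antisymm
      (convexHull_mono vertexSet_subset_modPoints)
  rw [modVertices, hull]
  exact extremePoints_convexHull_subset.antisymm vertexSet_subset_extremePoints

theorem numVertices_succ {s : ℕ} (hs : 2 ≤ s) (hT : Tratio s ≤ 5) :
    numVertices (s + 1) = 2 * (s.divisors.card - 1) := by
  rw [numVertices, modVertices_eq_vertexSet hT, Set.ncard_coe_finset, card_vertexSet hs]

theorem stmt9 :
    (∀ n : ℕ, 3 ≤ n → Tratio (n - 1) ≤ 5 →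
      numVertices n = 2 * ((n - 1).divisors.card - 1)) ∧
    (∀ r s t n : ℕ, n = 2 ^ r * 3 ^ s * 5 ^ t + 1 → 3 ≤ n →
      numVertices n = 2 * ((n - 1).divisors.card - 1)) := by
  have main : ∀ n : ℕ, 3 ≤ n → Tratio (n - 1) ≤ 5 →
      numVertices n = 2 * ((n - 1).divisors.card - 1) := by
    intro n hn hT
    obtain ⟨s, rfl⟩ : ∃ s, n = s + 1 := ⟨n - 1, by omega⟩
    simp only [Nat.add_sub_cancel] at hT ⊢
    exact numVertices_succ (by omega) hT
  refine ⟨main, fun r s t n hn h3 ↦ main n h3 ?_⟩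
  subst hn
  simpa using Tratio_le_of_forall_prime_dvd_le (k := 5) (by positivity)
    fun p hp hdvd ↦ hp.le_five_of_dvd hdvd
end
end

section
/- For every prime p, v(p + 1) ≥ 2(τ(2p + 1) − 3). -/
/-!
For every factorisation `2p + 1 = de` with `d, e ≥ 5`, the point `(d, p + 1 - e)` of `G_{p+1}` is
the unique minimiser on `G_{p+1}` of the linear form `(a, b) ↦ e a - d b`, hence a vertex of the
hull. Indeed, with `x = a` and `y = p + 1 - b` we have `p + 1 ∣ xy + 1`: either `xy = p`, so
`{x, y} = {1, p}` as `p` is prime and `ex + dy > 2de` as `d, e ≥ 5`, or `xy ≥ 2p + 1 = de`, and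
then AM-GM gives `ex + dy ≥ 2√(de · xy) ≥ 2de`, with equality only at `(x, y) = (d, e)`. The
reflections of these points in the diagonal and the corners `(1, 1)`, `(p, p)` give `2k + 2`
vertices, where `k` counts the divisors `d` with `d, (2p + 1)/d ≥ 5`; all but at most four
divisors of the odd number `2p + 1`, namely `1, 3, (2p + 1)/3, 2p + 1`, are of this kind.
-/

open Filter MeasureTheory

noncomputable section

lemma mem_extremePoints_convexHull_of_forall_lt_s13 {𝕜 E : Type*} [Field 𝕜] [LinearOrder 𝕜]
    [IsStrictOrderedRing 𝕜] [AddCommGroup E] [Module 𝕜 E] {S : Set E} {x : E}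
    (f : E →ₗ[𝕜] 𝕜) (hx : x ∈ S) (hlt : ∀ y ∈ S, y ≠ x → f x < f y) :
    x ∈ (convexHull 𝕜 S).extremePoints 𝕜 := by
  have hsub : convexHull 𝕜 S ⊆ insert x {y | f x < f y} := by
    rw [← Set.insert_sdiff_self_of_mem hx]
    rcases (S \ {x}).eq_empty_or_nonempty with hempty | hne
    · simp [hempty]
    have hrest : convexHull 𝕜 (S \ {x}) ⊆ {y | f x < f y} :=
      convexHull_min (fun y hy => hlt y hy.1 hy.2) (convex_halfSpace_gt f.isLinear _)
    rw [convexHull_insert hne, convexJoin_singleton_left]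
    simp only [Set.iUnion_subset_iff]
    rintro z hz _ ⟨a, b, ha, hb, hab, rfl⟩
    obtain rfl : a = 1 - b := eq_sub_of_add_eq hab
    rcases hb.eq_or_lt with rfl | hb
    · simp
    · have hz : f x < f z := hrest hz
      right
      simp only [Set.mem_ofPred_eq, map_add, map_smul, smul_eq_mul]
      linarith [mul_pos hb (sub_pos.2 hz)]
  refine ⟨subset_convexHull 𝕜 S hx, fun x₁ h₁ x₂ h₂ ⟨a, b, ha, hb, hab, hx⟩ => ?_⟩
  have hfx : a * f x₁ + b * f x₂ = (a + b) * f x := by simp [← hx, hab]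
  by_contra hne
  have h₁ : f x < f x₁ := (hsub h₁).resolve_left hne
  have h₂ : f x ≤ f x₂ := by rcases hsub h₂ with rfl | h₂; exacts [le_rfl, h₂.le]
  nlinarith [mul_pos ha (sub_pos.2 h₁), mul_nonneg hb.le (sub_nonneg.2 h₂)]

lemma modPoints_finite (n : ℕ) : (modPoints n).Finite := by
  refine (((Set.finite_Icc (1 : ℤ) (n - 1)).prod (Set.finite_Icc (1 : ℤ) (n - 1))).image
    fun q => ((q.1 : ℝ), (q.2 : ℝ))).subset ?_
  rintro _ ⟨a, b, ha₁, ha₂, hb₁, hb₂, -, rfl⟩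
  exact ⟨(a, b), ⟨⟨ha₁, ha₂⟩, hb₁, hb₂⟩, rfl⟩

lemma swap_mem_modPoints_s13 {n : ℕ} {q : ℝ × ℝ} (hq : q ∈ modPoints n) : q.swap ∈ modPoints n := by
  obtain ⟨a, b, ha₁, ha₂, hb₁, hb₂, hdvd, rfl⟩ := hq
  exact ⟨b, a, hb₁, hb₂, ha₁, ha₂, mul_comm a b ▸ hdvd, rfl⟩

lemma swap_mem_modVertices_s13 {n : ℕ} {q : ℝ × ℝ} (hq : q ∈ modVertices n) :
    q.swap ∈ modVertices n := by
  let σ := LinearEquiv.prodComm ℝ ℝ ℝ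
  have hσ : σ '' modPoints n = modPoints n := by
    ext q
    exact ⟨by rintro ⟨q, hq, rfl⟩; exact swap_mem_modPoints_s13 hq,
      fun hq => ⟨q.swap, swap_mem_modPoints_s13 hq, q.swap_swap⟩⟩
  have hhull : σ '' modHull n = modHull n :=
    (σ.toLinearMap.image_convexHull _).trans (congrArg _ hσ)
  have h := image_extremePoints σ (modHull n)
  rw [hhull] at h
  exact h.subset (Set.mem_image_of_mem σ hq)

lemma mk_mem_modVertices_of_forall_lt {n : ℕ} {a₀ b₀ : ℤ} (u v : ℤ)
    (ha₀ : 1 ≤ a₀ ∧ a₀ ≤ n - 1) (hb₀ : 1 ≤ b₀ ∧ b₀ ≤ n - 1) (hdvd₀ : (n : ℤ) ∣ a₀ * b₀ - 1)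
    (hlt : ∀ a b : ℤ, 1 ≤ a → a ≤ n - 1 → 1 ≤ b → b ≤ n - 1 → (n : ℤ) ∣ a * b - 1 →
      (a, b) ≠ (a₀, b₀) → u * a₀ + v * b₀ < u * a + v * b) :
    ((a₀ : ℝ), (b₀ : ℝ)) ∈ modVertices n := by
  refine mem_extremePoints_convexHull_of_forall_lt_s13
    ((u : ℝ) • LinearMap.fst ℝ ℝ ℝ + (v : ℝ) • LinearMap.snd ℝ ℝ ℝ)
    ⟨a₀, b₀, ha₀.1, ha₀.2, hb₀.1, hb₀.2, hdvd₀, rfl⟩ ?_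
  rintro _ ⟨a, b, ha₁, ha₂, hb₁, hb₂, hdvd, rfl⟩ hne
  have hne' : (a, b) ≠ (a₀, b₀) := by
    rintro ⟨⟩; exact hne rfl
  simp only [LinearMap.add_apply, LinearMap.smul_apply, LinearMap.fst_apply,
    LinearMap.snd_apply, smul_eq_mul]
  exact_mod_cast hlt a b ha₁ ha₂ hb₁ hb₂ hdvd hne'

lemma one_one_mem_modVertices {n : ℕ} (hn : 2 ≤ n) : ((1 : ℝ), (1 : ℝ)) ∈ modVertices n := by
  have h := mk_mem_modVertices_of_forall_lt (n := n) (a₀ := 1) (b₀ := 1) 1 1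
    (by omega) (by omega) (by simp) fun a b ha _ hb _ _ hne => by
      have : ¬(a = 1 ∧ b = 1) := fun h => hne (by rw [h.1, h.2])
      omega
  simpa using h

lemma sub_one_sub_one_mem_modVertices {n : ℕ} (hn : 2 ≤ n) :
    ((n : ℝ) - 1, (n : ℝ) - 1) ∈ modVertices n := by
  have h := mk_mem_modVertices_of_forall_lt (n := n) (a₀ := n - 1) (b₀ := n - 1) (-1) (-1)
    (by omega) (by omega) ⟨n - 2, by ring⟩ fun a b _ ha _ hb _ hne => by
      have : ¬(a = n - 1 ∧ b = n - 1) := fun h => hne (by rw [h.1, h.2])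
      omega
  simpa using h

lemma two_mul_mul_lt_of_mul_le {d e x y : ℤ} (hd : 0 < d) (he : 0 < e) (hx : 0 < x)
    (hy : 0 < y) (hle : d * e ≤ x * y) (hne : (x, y) ≠ (d, e)) :
    2 * (d * e) < e * x + d * y := by
  have hsq : (2 * (d * e)) ^ 2 < (e * x + d * y) ^ 2 := by
    rcases hle.lt_or_eq with hlt | heq
    · nlinarith [sq_nonneg (e * x - d * y), mul_pos hd he]
    · have hne' : e * x ≠ d * y := by
        intro h
        have hxd : x = d := by nlinarith [sq_nonneg (x - d), sq_nonneg (x + d)]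
        subst hxd
        exact hne (by rw [mul_left_cancel₀ hx.ne' (h.symm.trans (mul_comm e x))])
      have hid : (e * x + d * y) ^ 2 = (e * x - d * y) ^ 2 + (2 * (d * e)) ^ 2 := by
        linear_combination (-4 * d * e) * heq
      linarith [sq_pos_of_ne_zero (sub_ne_zero.2 hne')]
  exact lt_of_pow_lt_pow_left₀ 2 (by positivity) hsq

lemma two_mul_mul_lt_of_dvd_mul_add_one {p : ℕ} (hp : p.Prime) {d e x y : ℤ}
    (hde : d * e = 2 * p + 1) (hd : 5 ≤ d) (he : 5 ≤ e) (hx : 0 < x) (hy : 0 < y)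
    (hdvd : (p : ℤ) + 1 ∣ x * y + 1) (hne : (x, y) ≠ (d, e)) :
    2 * (d * e) < e * x + d * y := by
  obtain ⟨k, hk⟩ := hdvd
  have hk : 0 < k := by nlinarith [mul_pos hx hy]
  rcases (show k = 1 ∨ 2 ≤ k by omega) with rfl | hk
  · have hxy : x * y = p := by linarith
    have hunit := (Nat.prime_iff_prime_int.mp hp).irreducible.isUnit_or_isUnit hxy.symm
    rcases hunit with h | h <;> rcases Int.isUnit_iff.1 h with rfl | rfl <;> nlinarith
  · exact two_mul_mul_lt_of_mul_le (by omega) (by omega) hx hy (by nlinarith) hne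

lemma mem_modVertices_of_mul_eq {p d e : ℕ} (hp : p.Prime) (hde : d * e = 2 * p + 1)
    (hd : 5 ≤ d) (he : 5 ≤ e) : ((d : ℝ), (p : ℝ) + 1 - e) ∈ modVertices (p + 1) := by
  have hdeZ : (d : ℤ) * e = 2 * p + 1 := by exact_mod_cast hde
  have hdZ : (5 : ℤ) ≤ d := by exact_mod_cast hd
  have heZ : (5 : ℤ) ≤ e := by exact_mod_cast he
  have h := mk_mem_modVertices_of_forall_lt (n := p + 1) (a₀ := d) (b₀ := p + 1 - e) e (-d)
    (by push_cast; constructor <;> nlinarith) (by push_cast; constructor <;> nlinarith)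
    ⟨d - 2, by push_cast; linear_combination (-1 : ℤ) * hdeZ⟩ fun a b ha₁ _ hb₁ hb₂ hdvd hne => by
      push_cast at hb₂ hdvd
      have hdvd' : (p : ℤ) + 1 ∣ a * (p + 1 - b) + 1 := by
        have h := (dvd_mul_left ((p : ℤ) + 1) a).sub hdvd
        rwa [show a * (p + 1) - (a * b - 1) = a * (p + 1 - b) + 1 by ring] at h
      have hne' : (a, p + 1 - b) ≠ ((d : ℤ), (e : ℤ)) := fun h => hne (by
        simp only [Prod.mk.injEq] at h ⊢; omega)
      linarith [two_mul_mul_lt_of_dvd_mul_add_one hp hdeZ hdZ heZ (by omega) (by omega) hdvd' hne']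
  simpa using h

def largeDivisors (N : ℕ) : Finset ℕ := N.divisors.filter fun d => 5 ≤ d ∧ 5 ≤ N / d

lemma card_divisors_le_card_largeDivisors_add_four {N : ℕ} (hN : Odd N) :
    N.divisors.card ≤ (largeDivisors N).card + 4 := by
  have hsmall : N.divisors.filter (fun d => ¬(5 ≤ d ∧ 5 ≤ N / d)) ⊆ {1, 3, N / 3, N} := by
    intro d hd
    obtain ⟨⟨hdvd, -⟩, hlt⟩ := by simpa only [Finset.mem_filter, Nat.mem_divisors] using hd
    have hde : d * (N / d) = N := Nat.mul_div_cancel' hdvd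
    obtain ⟨k, hk⟩ := hN.of_dvd_nat hdvd
    obtain ⟨l, hl⟩ := hN.of_dvd_nat (Nat.div_dvd_of_dvd hdvd)
    simp only [Finset.mem_insert, Finset.mem_singleton]
    rcases not_and_or.1 hlt with h | h
    · omega
    · obtain rfl | rfl : l = 0 ∨ l = 1 := by omega
      all_goals rw [hl] at hde; omega
  calc N.divisors.card
      = (largeDivisors N).card + (N.divisors.filter fun d => ¬(5 ≤ d ∧ 5 ≤ N / d)).card :=
        (Finset.card_filter_add_card_filter_not _).symm
    _ ≤ (largeDivisors N).card + 4 :=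
        Nat.add_le_add_left ((Finset.card_le_card hsmall).trans Finset.card_le_four) _

lemma mem_largeDivisors {N d : ℕ} (hN : N ≠ 0) :
    d ∈ largeDivisors N ↔ d ∣ N ∧ 5 ≤ d ∧ 5 ≤ N / d := by
  simp [largeDivisors, hN]

def largeDivisorPoint (p d : ℕ) : ℝ × ℝ := ((d : ℝ), (p : ℝ) + 1 - ((2 * p + 1) / d : ℕ))

lemma largeDivisorPoint_mem_modVertices {p d : ℕ} (hp : p.Prime)
    (hd : d ∈ largeDivisors (2 * p + 1)) : largeDivisorPoint p d ∈ modVertices (p + 1) := by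
  obtain ⟨hdvd, hd, he⟩ := (mem_largeDivisors (by omega)).1 hd
  exact mem_modVertices_of_mul_eq hp (Nat.mul_div_cancel' hdvd) hd he

lemma largeDivisorPoint_fst_lt_snd {p d : ℕ} (hd : d ∈ largeDivisors (2 * p + 1)) :
    (largeDivisorPoint p d).1 < (largeDivisorPoint p d).2 := by
  obtain ⟨hdvd, hd, he⟩ := (mem_largeDivisors (by omega)).1 hd
  have hde := Nat.mul_div_cancel' hdvd
  simp only [largeDivisorPoint]
  generalize (2 * p + 1) / d = e at hde he ⊢
  have : d + e < p + 1 := by nlinarith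
  have : (d : ℝ) + e < p + 1 := by exact_mod_cast this
  linarith

lemma two_mul_card_largeDivisors_add_two_le {p : ℕ} (hp : p.Prime) :
    2 * (largeDivisors (2 * p + 1)).card + 2 ≤ numVertices (p + 1) := by
  classical
  set D := largeDivisors (2 * p + 1)
  let P := largeDivisorPoint p
  have habove : ∀ q ∈ D.image P, q.1 < q.2 := by
    simpa using fun d hd => largeDivisorPoint_fst_lt_snd hd
  have hbelow : ∀ q ∈ D.image (Prod.swap ∘ P), q.2 < q.1 := by
    simpa using fun d hd => largeDivisorPoint_fst_lt_snd hd
  let corners : Finset (ℝ × ℝ) := {(1, 1), ((p : ℝ), (p : ℝ))}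
  have hdiag : ∀ q ∈ corners, q.1 = q.2 := by simp [corners]
  have hdisj₁ : Disjoint (D.image P) (D.image (Prod.swap ∘ P)) :=
    Finset.disjoint_left.2 fun q h₁ h₂ => lt_asymm (habove q h₁) (hbelow q h₂)
  have hdisj₂ : Disjoint (D.image P ∪ D.image (Prod.swap ∘ P)) corners := by
    refine Finset.disjoint_left.2 fun q h₁ h₂ => ?_
    rcases Finset.mem_union.1 h₁ with h₁ | h₁
    exacts [(habove q h₁).ne (hdiag q h₂), (hbelow q h₁).ne (hdiag q h₂).symm]
  have hcard : (D.image P ∪ D.image (Prod.swap ∘ P) ∪ corners).card = 2 * D.card + 2 := by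
    rw [Finset.card_union_of_disjoint hdisj₂, Finset.card_union_of_disjoint hdisj₁,
      Finset.card_image_of_injOn fun a _ b _ h => by
        simpa [P, largeDivisorPoint] using congrArg Prod.fst h,
      Finset.card_image_of_injOn fun a _ b _ h => by
        simpa [P, largeDivisorPoint] using congrArg Prod.snd h,
      Finset.card_pair fun h => hp.one_lt.ne (by exact_mod_cast (Prod.mk.inj h).1)]
    ring
  have hsub : ((D.image P ∪ D.image (Prod.swap ∘ P) ∪ corners : Finset (ℝ × ℝ)) : Set (ℝ × ℝ))
      ⊆ modVertices (p + 1) := by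
    have hn : 2 ≤ p + 1 := hp.two_le.trans p.le_succ
    simp only [Finset.coe_union, Finset.coe_image, Set.union_subset_iff, Set.image_subset_iff,
      corners, Finset.coe_insert, Finset.coe_singleton, Set.insert_subset_iff,
      Set.singleton_subset_iff]
    exact ⟨⟨fun d hd => largeDivisorPoint_mem_modVertices hp hd,
      fun d hd => swap_mem_modVertices_s13 (largeDivisorPoint_mem_modVertices hp hd)⟩,
      one_one_mem_modVertices hn, by simpa using sub_one_sub_one_mem_modVertices hn⟩
  have hfin : (modVertices (p + 1)).Finite :=
    (modPoints_finite _).subset extremePoints_convexHull_subset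
  rw [← hcard, numVertices, ← Set.ncard_coe_finset]
  exact Set.ncard_le_ncard hsub hfin

theorem stmt13 (p : ℕ) (hp : p.Prime) :
    2 * (((2 * p + 1).divisors.card : ℤ) - 3) ≤ (numVertices (p + 1) : ℤ) := by
  have hτ := card_divisors_le_card_largeDivisors_add_four (odd_two_mul_add_one p)
  have hv := two_mul_card_largeDivisors_add_two_le hp
  omega
end
end

section
/- For every ε > 0 there exists N such that for all integers n ≥ N, v(n) ≤ n^{3/4 + ε}. -/
open Filter MeasureTheory

noncomputable section

/-!
Only two facts about `G_n` matter: its points are lattice points in a box of side `n`, and the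
vertices of `C_n` are extreme points of a convex set. Split the vertices by the chord from a
leftmost to a rightmost vertex: apart from at most four vertices on the two extreme columns, they
form an upper and a lower chain. Along a chain ordered by abscissa, consecutive differences are
lattice vectors with positive first coordinate and strictly decreasing slopes, so they are pairwise
distinct, and their `ℓ¹`-lengths add up to at most `3n`. At most `t (2t + 1)` of them have length
`≤ t` and at most `3n / (t + 1)` are longer; `t ≈ n^{1/4}` gives `v(n) = O(n^{3/4})`.
-/

open Finset

/-- For `q.1 < r.1`, `cross q p r` is positive exactly when `p` lies strictly above the
line `qr`. -/
def cross {R : Type*} [CommRing R] (q p r : R × R) : R :=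
  (r.1 - q.1) * (p.2 - q.2) - (r.2 - q.2) * (p.1 - q.1)

section Plane

variable {A : Set (ℝ × ℝ)} {p q r : ℝ × ℝ}

theorem exists_mem_openSegment_fst_eq (hq : q.1 < p.1) (hr : p.1 < r.1) :
    ∃ c ∈ openSegment ℝ q r, c.1 = p.1 ∧ (r.1 - q.1) * (p.2 - c.2) = cross q p r := by
  have hqr : 0 < r.1 - q.1 := by linarith
  refine ⟨AffineMap.lineMap q r ((p.1 - q.1) / (r.1 - q.1)), ?_, ?_, ?_⟩
  · rw [openSegment_eq_image_lineMap]
    refine ⟨_, ⟨div_pos (by linarith) hqr, (div_lt_one hqr).2 (by linarith)⟩, rfl⟩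
  · simp only [AffineMap.lineMap_apply_module, Prod.fst_add, Prod.smul_fst, smul_eq_mul]
    field_simp
    ring
  · simp only [AffineMap.lineMap_apply_module, Prod.snd_add, Prod.smul_snd, smul_eq_mul, cross]
    field_simp
    ring

theorem false_of_mem_extremePoints_of_fst_eq {c c' : ℝ × ℝ} (hp : p ∈ A.extremePoints ℝ)
    (hc : c ∈ A) (hc' : c' ∈ A) (h₁ : c.1 = p.1) (h₁' : c'.1 = p.1) (h₂ : c.2 < p.2)
    (h₂' : p.2 < c'.2) : False := by
  have hcc' : 0 < c'.2 - c.2 := by linarith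
  have hseg : p ∈ openSegment ℝ c c' := by
    rw [openSegment_eq_image_lineMap]
    refine ⟨(p.2 - c.2) / (c'.2 - c.2),
      ⟨div_pos (by linarith) hcc', (div_lt_one hcc').2 (by linarith)⟩, ?_⟩
    ext
    · simp only [AffineMap.lineMap_apply_module, Prod.fst_add, Prod.smul_fst, smul_eq_mul, h₁,
        h₁']
      ring
    · simp only [AffineMap.lineMap_apply_module, Prod.snd_add, Prod.smul_snd, smul_eq_mul]
      field_simp
      ring
  exact h₂.ne (congrArg Prod.snd (hp.2 hc hc' hseg))

theorem cross_ne_zero_of_mem_extremePoints (hp : p ∈ A.extremePoints ℝ) (hq : q ∈ A)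
    (hr : r ∈ A) (hqp : q.1 < p.1) (hpr : p.1 < r.1) : cross q p r ≠ 0 := by
  obtain ⟨c, hc, hc₁, hc₂⟩ := exists_mem_openSegment_fst_eq hqp hpr
  intro h
  have hcp : c = p := Prod.ext hc₁ (by nlinarith)
  exact hqp.ne (congrArg Prod.fst (hp.2 hq hr (hcp ▸ hc)))

theorem cross_pos_of_cross_pos (hA : Convex ℝ A) (hp : p ∈ A.extremePoints ℝ)
    {q' r' : ℝ × ℝ} (hq : q ∈ A) (hr : r ∈ A) (hq' : q' ∈ A) (hr' : r' ∈ A)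
    (hqp : q.1 < p.1) (hpr : p.1 < r.1) (hqp' : q'.1 < p.1) (hpr' : p.1 < r'.1)
    (hpos : 0 < cross q p r) : 0 < cross q' p r' := by
  obtain ⟨c, hc, hc₁, hc₂⟩ := exists_mem_openSegment_fst_eq hqp hpr
  obtain ⟨c', hc', hc₁', hc₂'⟩ := exists_mem_openSegment_fst_eq hqp' hpr'
  refine (cross_ne_zero_of_mem_extremePoints hp hq' hr' hqp' hpr').lt_or_gt.resolve_left
    fun hneg ↦ ?_
  refine false_of_mem_extremePoints_of_fst_eq hp (hA.openSegment_subset hq hr hc)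
    (hA.openSegment_subset hq' hr' hc') hc₁ hc₁' ?_ ?_
  · nlinarith
  · nlinarith

end Plane

theorem card_mul_le_of_injOn {ι : Type*} (s : Finset ι) (d : ι → ℤ × ℤ)
    (hd : Set.InjOn d s) (hpos : ∀ i ∈ s, 0 < (d i).1) (t M : ℕ)
    (hM : ∑ i ∈ s, ((d i).1 + |(d i).2|) ≤ M) :
    #s * (t + 1) ≤ t * (2 * t + 1) * (t + 1) + M := by
  classical
  set small := s.filter fun i ↦ (d i).1 + |(d i).2| ≤ t
  set large := s.filter fun i ↦ ¬(d i).1 + |(d i).2| ≤ t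
  have hsmall : #small ≤ t * (2 * t + 1) := by
    have hmaps : ∀ i ∈ small, d i ∈ Icc (1 : ℤ) t ×ˢ Icc (-(t : ℤ)) t := by
      intro i hi
      obtain ⟨his, hi⟩ := mem_filter.1 hi
      have := hpos i his
      have := abs_nonneg (d i).2
      have := abs_le.1 (show |(d i).2| ≤ t by linarith)
      simp only [mem_product, mem_Icc]
      omega
    have := card_le_card_of_injOn d hmaps (hd.mono (filter_subset _ s))
    simpa [Int.card_Icc, show ((t : ℤ) + 1 + t).toNat = 2 * t + 1 by omega] using this
  have hlarge : #large * (t + 1) ≤ (M : ℤ) := calc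
    (#large * (t + 1) : ℤ) = ∑ _ ∈ large, ((t : ℤ) + 1) := by simp
    _ ≤ ∑ i ∈ large, ((d i).1 + |(d i).2|) := sum_le_sum fun i hi ↦ by
      have := (mem_filter.1 hi).2
      omega
    _ ≤ ∑ i ∈ s, ((d i).1 + |(d i).2|) := sum_le_sum_of_subset_of_nonneg (filter_subset _ s)
      fun i hi _ ↦ add_nonneg (hpos i hi).le (abs_nonneg _)
    _ ≤ M := hM
  have hsplit : #small + #large = #s := card_filter_add_card_filter_not _
  have : #large * (t + 1) ≤ M := by exact_mod_cast hlarge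
  rw [← hsplit, add_mul]
  gcongr

theorem Finset.exists_enum_of_injOn {α β : Type*} [DecidableEq α] [Inhabited α] [LinearOrder β]
    (s : Finset α) (f : α → β) (hf : Set.InjOn f s) :
    ∃ u : ℕ → α, (∀ i, i + 1 < #s → f (u i) < f (u (i + 1))) ∧
      (range #s).image u = s := by
  induction s using Finset.induction_on_max_value f with
  | empty => exact ⟨fun _ ↦ default, by simp, by simp⟩
  | insert a s ha hmax ih =>
    obtain ⟨u, hu, himg⟩ := ih (hf.mono (subset_insert a s))
    have hlt : ∀ x ∈ s, f x < f a := fun x hx ↦ (hmax x hx).lt_of_ne fun h ↦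
      ha (hf (mem_insert_of_mem hx) (mem_insert_self a s) h ▸ hx)
    have hus : ∀ i < #s, u i ∈ s := fun i hi ↦ himg ▸ mem_image_of_mem u (mem_range.2 hi)
    refine ⟨Function.update u #s a, fun i hi ↦ ?_, ?_⟩
    · rw [card_insert_of_notMem ha] at hi
      rw [Function.update_of_ne (by omega)]
      rcases (Nat.lt_succ_iff.1 hi).lt_or_eq with hi | hi
      · rw [Function.update_of_ne (by omega)]
        exact hu i hi
      · rw [hi, Function.update_self]
        exact hlt _ (hus i (by omega))
    · rw [card_insert_of_notMem ha, range_add_one, image_insert, Function.update_self,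
        image_congr fun i hi ↦ Function.update_of_ne (mem_range.1 hi).ne a u, himg]

theorem sum_abs_sub_eq_of_unimodal {G : Type*} [AddCommGroup G] [LinearOrder G]
    [IsOrderedAddMonoid G] (y : ℕ → G) {j m : ℕ} (hjm : j ≤ m)
    (hup : ∀ i < j, y i ≤ y (i + 1)) (hdown : ∀ i, j ≤ i → i < m → y (i + 1) ≤ y i) :
    ∑ i ∈ range m, |y (i + 1) - y i| = 2 • y j - y 0 - y m := by
  rw [← sum_range_add_sum_Ico _ hjm,
    sum_congr rfl fun i hi ↦ abs_of_nonneg (sub_nonneg.2 (hup i (mem_range.1 hi))),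
    sum_congr rfl fun i hi ↦
      abs_of_nonpos (sub_nonpos.2 (hdown i (mem_Ico.1 hi).1 (mem_Ico.1 hi).2)),
    sum_range_sub, sum_neg_distrib, sum_Ico_sub y hjm]
  abel

structure IsConcaveChain (u : ℕ → ℤ × ℤ) (m : ℕ) : Prop where
  fst_lt : ∀ i < m, (u i).1 < (u (i + 1)).1
  cross_pos : ∀ i, i + 2 ≤ m → 0 < cross (u i) (u (i + 1)) (u (i + 2))

def vecSlope (v : ℤ × ℤ) : ℚ := v.2 / v.1

section ConcaveChain

variable {u : ℕ → ℤ × ℤ} {m : ℕ}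

theorem vecSlope_succ_lt_of_concave (hu : IsConcaveChain u m) {i : ℕ} (hi : i + 2 ≤ m) :
    vecSlope (u (i + 1 + 1) - u (i + 1)) < vecSlope (u (i + 1) - u i) := by
  have h₀ : (0 : ℚ) < (u (i + 1)).1 - (u i).1 := by
    exact_mod_cast sub_pos.2 (hu.fst_lt i (by omega))
  have h₁ : (0 : ℚ) < (u (i + 2)).1 - (u (i + 1)).1 := by
    exact_mod_cast sub_pos.2 (hu.fst_lt (i + 1) (by omega))
  have hc : (0 : ℚ) < cross (u i) (u (i + 1)) (u (i + 2)) := by exact_mod_cast hu.cross_pos i hi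
  simp only [vecSlope, Prod.fst_sub, Prod.snd_sub, Int.cast_sub]
  rw [div_lt_div_iff₀ h₁ h₀]
  simp only [cross] at hc
  push_cast at hc
  linarith

theorem vecSlope_lt_of_concave (hu : IsConcaveChain u m) {i j : ℕ} (hij : i < j) (hj : j < m) :
    vecSlope (u (j + 1) - u j) < vecSlope (u (i + 1) - u i) := by
  induction j, hij using Nat.le_induction with
  | base => exact vecSlope_succ_lt_of_concave hu hj
  | succ j hij ih =>
    exact (vecSlope_succ_lt_of_concave hu hj).trans (ih (by omega))

theorem injOn_sub_of_concave (hu : IsConcaveChain u m) :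
    Set.InjOn (fun i ↦ u (i + 1) - u i) (range m) := by
  intro i hi j hj hij
  simp only [coe_range, Set.mem_Iio] at hi hj
  by_contra hne
  rcases Nat.lt_or_gt_of_ne hne with h | h
  · exact (vecSlope_lt_of_concave hu h hj).ne (congrArg vecSlope hij).symm
  · exact (vecSlope_lt_of_concave hu h hi).ne (congrArg vecSlope hij)

theorem sum_le_of_concave (K : ℕ) (hu : IsConcaveChain u m)
    (hdiam : ∀ i ≤ m, ∀ j ≤ m, (u i).1 - (u j).1 ≤ K ∧ (u i).2 - (u j).2 ≤ K) :
    ∑ i ∈ range m, ((u (i + 1) - u i).1 + |(u (i + 1) - u i).2|) ≤ 3 * K := by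
  have hx : ∑ i ∈ range m, (u (i + 1) - u i).1 = (u m).1 - (u 0).1 :=
    sum_range_sub (fun i ↦ (u i).1) m
  -- `j` is the first step that does not rise; since slopes decrease, no later step rises
  have hex : ∃ j, m ≤ j ∨ (u (j + 1)).2 ≤ (u j).2 := ⟨m, Or.inl le_rfl⟩
  set j := Nat.find hex
  have hjm : j ≤ m := Nat.find_min' hex (Or.inl le_rfl)
  have hup : ∀ i < j, (u i).2 ≤ (u (i + 1)).2 := fun i hi ↦ by
    have := Nat.find_min hex hi
    omega
  have hdown : ∀ i, j ≤ i → i < m → (u (i + 1)).2 ≤ (u i).2 := by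
    intro i hji him
    have hj : (u (j + 1)).2 ≤ (u j).2 := (Nat.find_spec hex).resolve_left (by omega)
    rcases hji.lt_or_eq with hji | rfl
    · have hs := vecSlope_lt_of_concave hu hji him
      have hd : (0 : ℚ) < (u (i + 1) - u i).1 := by exact_mod_cast sub_pos.2 (hu.fst_lt i him)
      have hsj : vecSlope (u (j + 1) - u j) ≤ 0 := div_nonpos_of_nonpos_of_nonneg
        (by exact_mod_cast sub_nonpos.2 hj)
        (by exact_mod_cast (sub_pos.2 (hu.fst_lt j (by omega))).le)
      have := (div_neg_iff.1 (hs.trans_le hsj)).resolve_left (fun h ↦ h.2.not_gt hd)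
      have : (u (i + 1) - u i).2 < 0 := by exact_mod_cast this.1
      simp only [Prod.snd_sub] at this
      omega
    · exact hj
  have hy := sum_abs_sub_eq_of_unimodal (fun i ↦ (u i).2) hjm hup hdown
  simp only [Prod.fst_sub, Prod.snd_sub] at hx hy ⊢
  rw [sum_add_distrib, hx, hy, two_nsmul]
  have h₁ := hdiam m le_rfl 0 (Nat.zero_le m)
  have h₂ := hdiam j hjm 0 (Nat.zero_le m)
  have h₃ := hdiam j hjm m le_rfl
  omega

end ConcaveChain

theorem card_mul_le_of_concave (C : Finset (ℤ × ℤ)) (K t : ℕ)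
    (hinj : Set.InjOn Prod.fst (C : Set (ℤ × ℤ)))
    (hconc : ∀ p ∈ C, ∀ q ∈ C, ∀ r ∈ C, p.1 < q.1 → q.1 < r.1 → 0 < cross p q r)
    (hdiam : ∀ p ∈ C, ∀ q ∈ C, p.1 - q.1 ≤ K ∧ p.2 - q.2 ≤ K) :
    #C * (t + 1) ≤ (t * (2 * t + 1) + 1) * (t + 1) + 3 * K := by
  obtain ⟨u, hu, himg⟩ := C.exists_enum_of_injOn Prod.fst hinj
  obtain hC | ⟨m, hm⟩ : #C = 0 ∨ ∃ m, #C = m + 1 := by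
    rcases #C with _ | m
    · exact .inl rfl
    · exact .inr ⟨m, rfl⟩
  · simp [hC]
  have hmem : ∀ i ≤ m, u i ∈ C := fun i hi ↦
    himg ▸ mem_image_of_mem u (mem_range.2 (by omega))
  have hchain : IsConcaveChain u m :=
    { fst_lt := fun i hi ↦ hu i (by omega)
      cross_pos := fun i hi ↦ hconc _ (hmem i (by omega)) _ (hmem (i + 1) (by omega)) _
        (hmem (i + 2) hi) (hu i (by omega)) (hu (i + 1) (by omega)) }
  have hsum := sum_le_of_concave K hchain fun i hi j hj ↦ hdiam _ (hmem i hi) _ (hmem j hj)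
  have hcount := card_mul_le_of_injOn (range m) _ (injOn_sub_of_concave hchain)
    (fun i hi ↦ sub_pos.2 (hchain.fst_lt i (mem_range.1 hi))) t (3 * K) (by exact_mod_cast hsum)
  rw [card_range] at hcount
  rw [hm]
  nlinarith

def toPlane (p : ℤ × ℤ) : ℝ × ℝ := (p.1, p.2)

theorem cross_toPlane (q p r : ℤ × ℤ) :
    cross (toPlane q) (toPlane p) (toPlane r) = cross q p r := by
  simp [cross, toPlane]

theorem cross_neg {R : Type*} [CommRing R] (q p r : R × R) :
    cross (-r) (-p) (-q) = -cross q p r := by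
  simp only [cross, Prod.fst_neg, Prod.snd_neg]
  ring

def upperChain (V : Finset (ℤ × ℤ)) (a b : ℤ × ℤ) : Finset (ℤ × ℤ) :=
  V.filter fun p ↦ a.1 < p.1 ∧ p.1 < b.1 ∧ 0 < cross a p b

section ConvexPosition

variable {A : Set (ℝ × ℝ)} {V : Finset (ℤ × ℤ)}

theorem card_filter_fst_eq_le_two (hV : ∀ p ∈ V, toPlane p ∈ A.extremePoints ℝ) (x : ℤ) :
    #(V.filter (·.1 = x)) ≤ 2 := by
  set S := V.filter (·.1 = x)
  rcases S.eq_empty_or_nonempty with hS | hS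
  · simp [hS]
  obtain ⟨lo, hlo, hlo_le⟩ := S.exists_min_image Prod.snd hS
  obtain ⟨hi, hhi, hle_hi⟩ := S.exists_max_image Prod.snd hS
  refine (card_le_card (t := {lo, hi}) fun p hp ↦ ?_).trans card_le_two
  by_contra hne
  simp only [mem_insert, mem_singleton, not_or] at hne
  obtain ⟨hpV, hpx⟩ := mem_filter.1 hp
  obtain ⟨hloV, hlox⟩ := mem_filter.1 hlo
  obtain ⟨hhiV, hhix⟩ := mem_filter.1 hhi
  have h₁ : lo.2 < p.2 := (hlo_le p hp).lt_of_ne fun h ↦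
    hne.1 (Prod.ext (hpx.trans hlox.symm) h.symm)
  have h₂ : p.2 < hi.2 := (hle_hi p hp).lt_of_ne fun h ↦
    hne.2 (Prod.ext (hpx.trans hhix.symm) h)
  exact false_of_mem_extremePoints_of_fst_eq (hV p hpV) (hV lo hloV).1 (hV hi hhiV).1
    (by simp [toPlane, hlox, hpx]) (by simp [toPlane, hhix, hpx])
    (by simpa [toPlane] using h₁) (by simpa [toPlane] using h₂)

variable {a b : ℤ × ℤ}

theorem snd_le_of_mem_upperChain (hA : Convex ℝ A)
    (hV : ∀ p ∈ V, toPlane p ∈ A.extremePoints ℝ) (ha : a ∈ V) (hb : b ∈ V)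
    {p q : ℤ × ℤ} (hp : p ∈ upperChain V a b) (hq : q ∈ V) (hpq : p.1 = q.1) :
    q.2 ≤ p.2 := by
  obtain ⟨hpV, hap, hpb, hcross⟩ := mem_filter.1 hp
  obtain ⟨c, hc, hc₁, hc₂⟩ := exists_mem_openSegment_fst_eq (p := toPlane p)
    (q := toPlane a) (r := toPlane b) (by simpa [toPlane] using hap) (by simpa [toPlane] using hpb)
  have hab : (0 : ℝ) < b.1 - a.1 := by exact_mod_cast sub_pos.2 (hap.trans hpb)
  have hcp : c.2 < p.2 := by
    rw [cross_toPlane] at hc₂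
    simp only [toPlane] at hc₂
    nlinarith [(Int.cast_pos (R := ℝ)).2 hcross]
  by_contra! hlt
  exact false_of_mem_extremePoints_of_fst_eq (hV p hpV)
    (hA.openSegment_subset (hV a ha).1 (hV b hb).1 hc) (hV q hq).1 hc₁ (by simp [toPlane, hpq])
    hcp (by simpa [toPlane] using hlt)

theorem cross_pos_of_mem_upperChain (hA : Convex ℝ A)
    (hV : ∀ p ∈ V, toPlane p ∈ A.extremePoints ℝ) (ha : a ∈ V) (hb : b ∈ V)
    {p q r : ℤ × ℤ} (hp : p ∈ upperChain V a b) (hq : q ∈ upperChain V a b)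
    (hr : r ∈ upperChain V a b)
    (hpq : p.1 < q.1) (hqr : q.1 < r.1) : 0 < cross p q r := by
  obtain ⟨hqV, haq, hqb, hcross⟩ := mem_filter.1 hq
  have := cross_pos_of_cross_pos hA (hV q hqV) (hV a ha).1 (hV b hb).1
    (hV p (mem_filter.1 hp).1).1 (hV r (mem_filter.1 hr).1).1 (by simpa [toPlane] using haq)
    (by simpa [toPlane] using hqb) (by simpa [toPlane] using hpq) (by simpa [toPlane] using hqr)
    (by simpa [cross_toPlane] using hcross)
  simpa [cross_toPlane] using this

theorem card_upperChain_mul_le (hA : Convex ℝ A)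
    (hV : ∀ p ∈ V, toPlane p ∈ A.extremePoints ℝ) (ha : a ∈ V) (hb : b ∈ V) (K t : ℕ)
    (hdiam : ∀ p ∈ V, ∀ q ∈ V, p.1 - q.1 ≤ K ∧ p.2 - q.2 ≤ K) :
    #(upperChain V a b) * (t + 1) ≤ (t * (2 * t + 1) + 1) * (t + 1) + 3 * K := by
  refine card_mul_le_of_concave _ K t (fun p hp q hq hpq ↦ ?_)
    (fun p hp q hq r hr ↦ cross_pos_of_mem_upperChain hA hV ha hb hp hq hr)
    fun p hp q hq ↦ hdiam p (mem_filter.1 hp).1 q (mem_filter.1 hq).1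
  exact Prod.ext hpq (le_antisymm
    (snd_le_of_mem_upperChain hA hV ha hb hq (mem_filter.1 hp).1 hpq.symm)
    (snd_le_of_mem_upperChain hA hV ha hb hp (mem_filter.1 hq).1 hpq))

/-- The vertices below the chord `ab` are, up to `p ↦ -p`, the vertices above the chord from `-b`
to `-a` of the reflected configuration. -/
theorem subset_union_upperChain (hV : ∀ p ∈ V, toPlane p ∈ A.extremePoints ℝ) (ha : a ∈ V)
    (hb : b ∈ V)
    (hamin : ∀ p ∈ V, a.1 ≤ p.1) (hbmax : ∀ p ∈ V, p.1 ≤ b.1) :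
    V ⊆ V.filter (·.1 = a.1) ∪ V.filter (·.1 = b.1) ∪ upperChain V a b ∪
      (upperChain (V.image Neg.neg) (-b) (-a)).image Neg.neg := by
  intro p hp
  simp only [mem_union, mem_filter, upperChain, mem_image]
  rcases (hamin p hp).lt_or_eq with hap | hap
  · rcases (hbmax p hp).lt_or_eq with hpb | hpb
    · have hne := cross_ne_zero_of_mem_extremePoints (hV p hp) (hV a ha).1 (hV b hb).1
        (by simpa [toPlane] using hap) (by simpa [toPlane] using hpb)
      rw [cross_toPlane, Int.cast_ne_zero] at hne
      rcases hne.lt_or_gt with hneg | hpos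
      · refine .inr ⟨-p, ⟨⟨p, hp, rfl⟩, ?_, ?_, ?_⟩, neg_neg p⟩
        · simpa using hpb
        · simpa using hap
        · rw [cross_neg]
          exact neg_pos.2 hneg
      · exact .inl (.inr ⟨hp, hap, hpb, hpos⟩)
    · exact .inl (.inl (.inr ⟨hp, hpb⟩))
  · exact .inl (.inl (.inl ⟨hp, hap.symm⟩))

theorem card_mul_le_of_extremePoints (hA : Convex ℝ A)
    (hV : ∀ p ∈ V, toPlane p ∈ A.extremePoints ℝ) (K t : ℕ)
    (hdiam : ∀ p ∈ V, ∀ q ∈ V, p.1 - q.1 ≤ K ∧ p.2 - q.2 ≤ K) :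
    #V * (t + 1) ≤ 6 * (t + 1) ^ 3 + 6 * K := by
  rcases V.eq_empty_or_nonempty with rfl | hne
  · simp
  obtain ⟨a, ha, hamin⟩ := V.exists_min_image Prod.fst hne
  obtain ⟨b, hb, hbmax⟩ := V.exists_max_image Prod.fst hne
  have hW :
      ∀ p ∈ V.image Neg.neg, toPlane p ∈ (LinearEquiv.neg ℝ '' A).extremePoints ℝ := by
    intro p hp
    obtain ⟨q, hq, rfl⟩ := mem_image.1 hp
    rw [← image_extremePoints]
    exact ⟨_, hV q hq, by simp [toPlane]⟩
  have hdiamW : ∀ p ∈ V.image Neg.neg, ∀ q ∈ V.image Neg.neg,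
      p.1 - q.1 ≤ K ∧ p.2 - q.2 ≤ K := by
    simp only [mem_image]
    rintro _ ⟨p, hp, rfl⟩ _ ⟨q, hq, rfl⟩
    have := hdiam q hq p hp
    simp only [Prod.fst_neg, Prod.snd_neg]
    omega
  have hU := card_upperChain_mul_le hA hV ha hb K t hdiam
  have hL := card_upperChain_mul_le (hA.linear_image (LinearEquiv.neg ℝ).toLinearMap) hW
    (mem_image_of_mem _ hb) (mem_image_of_mem _ ha) K t hdiamW
  have hcard := (card_le_card (subset_union_upperChain hV ha hb hamin hbmax)).trans
    ((card_union_le _ _).trans (add_le_add ((card_union_le _ _).trans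
      (add_le_add (card_union_le _ _) le_rfl)) card_image_le))
  have ha₂ := card_filter_fst_eq_le_two hV a.1
  have hb₂ := card_filter_fst_eq_le_two hV b.1
  have hV₄ : #V ≤ #(upperChain V a b) + #(upperChain (V.image Neg.neg) (-b) (-a)) + 4 := by
    omega
  calc #V * (t + 1)
      ≤ (#(upperChain V a b) + #(upperChain (V.image Neg.neg) (-b) (-a)) + 4) * (t + 1) := by
        gcongr
    _ ≤ 2 * ((t * (2 * t + 1) + 1) * (t + 1) + 3 * K) + 4 * (t + 1) := by
        rw [add_mul, add_mul]
        omega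
    _ ≤ 6 * (t + 1) ^ 3 + 6 * K := by ring_nf; omega

end ConvexPosition

theorem numVertices_mul_le (n t : ℕ) : numVertices n * (t + 1) ≤ 6 * (t + 1) ^ 3 + 6 * n := by
  classical
  set V := (Icc ((1 : ℤ), (1 : ℤ)) ((n : ℤ) - 1, (n : ℤ) - 1)).filter
    (toPlane · ∈ modVertices n)
  have hverts : modVertices n = toPlane '' V := by
    ext x
    refine ⟨fun hx ↦ ?_, ?_⟩
    · obtain ⟨a, b, h₁, h₂, h₃, h₄, -, rfl⟩ := extremePoints_convexHull_subset hx
      exact ⟨(a, b), mem_filter.2 ⟨mem_Icc.2 ⟨⟨h₁, h₃⟩, h₂, h₄⟩, hx⟩, rfl⟩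
    · rintro ⟨p, hp, rfl⟩
      exact (mem_filter.1 hp).2
  have hinj : Function.Injective toPlane := fun p q h ↦ by
    simp only [toPlane, Prod.mk.injEq, Int.cast_inj] at h
    exact Prod.ext h.1 h.2
  rw [numVertices, hverts, Set.ncard_image_of_injective _ hinj, Set.ncard_coe_finset]
  refine card_mul_le_of_extremePoints (convex_convexHull ℝ (modPoints n))
    (fun p hp ↦ (mem_filter.1 hp).2) n t fun p hp q hq ↦ ?_
  have hp := mem_Icc.1 (mem_filter.1 hp).1
  have hq := mem_Icc.1 (mem_filter.1 hq).1
  simp only [Prod.le_def] at hp hq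
  omega

theorem numVertices_le (n : ℕ) (hn : 1 ≤ n) :
    (numVertices n : ℝ) ≤ 30 * (n : ℝ) ^ ((3 : ℝ) / 4) := by
  set x := (n : ℝ) ^ ((1 : ℝ) / 4)
  have hx : 1 ≤ x := Real.one_le_rpow (by exact_mod_cast hn) (by norm_num)
  have hpow (k : ℕ) : (n : ℝ) ^ ((k : ℝ) / 4) = x ^ k := by
    rw [← Real.rpow_natCast, ← Real.rpow_mul (Nat.cast_nonneg n)]
    ring_nf
  have hx₄ : (n : ℝ) = x ^ 4 := by simpa using hpow 4
  set s := ⌈x⌉₊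
  have hxs : x ≤ s := Nat.le_ceil x
  have hsx : (s : ℝ) < x + 1 := Nat.ceil_lt_add_one (by positivity)
  have hs : 1 ≤ s := by exact_mod_cast hx.trans hxs
  have h := numVertices_mul_le n (s - 1)
  rw [Nat.sub_add_cancel hs] at h
  have h' : (numVertices n : ℝ) * s ≤ 6 * s ^ 3 + 6 * x ^ 4 := by
    rw [← hx₄]
    exact_mod_cast h
  have hs₂ : (s : ℝ) ^ 2 ≤ 4 * x ^ 2 := by nlinarith
  rw [show ((3 : ℝ) / 4) = ((3 : ℕ) : ℝ) / 4 by norm_num, hpow 3]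
  refine le_of_mul_le_mul_right ?_ (show (0 : ℝ) < s by positivity)
  nlinarith [mul_le_mul_of_nonneg_left hxs (by positivity : (0 : ℝ) ≤ x ^ 3),
    mul_le_mul_of_nonneg_left hs₂ (by positivity : (0 : ℝ) ≤ s),
    pow_le_pow_right₀ hx (show 2 ≤ 3 by norm_num)]

theorem stmt16 (ε : ℝ) (hε : 0 < ε) :
    ∃ N : ℕ, ∀ n : ℕ, N ≤ n → (numVertices n : ℝ) ≤ (n : ℝ) ^ ((3 : ℝ) / 4 + ε) := by
  have hlarge : ∀ᶠ n : ℕ in atTop, 30 ≤ (n : ℝ) ^ ε ∧ 1 ≤ n :=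
    (((tendsto_rpow_atTop hε).comp tendsto_natCast_atTop_atTop).eventually_ge_atTop 30).and
      (eventually_ge_atTop 1)
  obtain ⟨N, hN⟩ := eventually_atTop.1 hlarge
  refine ⟨N, fun n hn ↦ ?_⟩
  obtain ⟨h30, hn₁⟩ := hN n hn
  rw [Real.rpow_add (by exact_mod_cast hn₁)]
  calc (numVertices n : ℝ) ≤ 30 * (n : ℝ) ^ ((3 : ℝ) / 4) := numVertices_le n hn₁
    _ ≤ (n : ℝ) ^ ((3 : ℝ) / 4) * (n : ℝ) ^ ε := by
      rw [mul_comm]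
      gcongr
end
end
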